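/- arXiv:1507.01884 — 9 statements merged into one kernel-verified Lean document; each statement's English description precedes it below -/
import Mathlib

section
/- The fifteenth cyclotomic polynomial factors over the reals as Φ₁₅(X) = (X⁴ + ((1−√5)/2)(−X³ + X² − X) + 1)·(X⁴ + ((1+√5)/2)(−X³ + X² − X) + 1), and ζ₁₅ = e^{2πi/15} is a root of the second factor X⁴ + ((1+√5)/2)(−X³ + X² − X) + 1. -/
open Polynomial

theorem aux_cyc15 {R : Type*} [CommRing R] (a b : R) (hs : a + b = 1) (hp : a * b = -1) :
    (X ^ 2 + X + 1 : R[X]) *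
      ((X ^ 4 + C a * (-X ^ 3 + X ^ 2 - X) + 1) *
        (X ^ 4 + C b * (-X ^ 3 + X ^ 2 - X) + 1)) = X ^ 10 + X ^ 5 + 1 := by
  have hs' : (C a + C b : R[X]) = 1 := by rw [← C_add, hs, map_one]
  have hp' : (C a * C b : R[X]) = -1 := by rw [← C_mul, hp, map_neg, map_one]
  linear_combination ((X^2+X+1 : R[X]) * (X^4+1) * (-X^3+X^2-X)) * hs' +
    ((X^2+X+1 : R[X]) * (-X^3+X^2-X)^2) * hp'

theorem aux_part1 : cyclotomic 15 ℝ =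
      (X ^ 4 + C ((1 - Real.sqrt 5) / 2) * (-X ^ 3 + X ^ 2 - X) + 1) *
        (X ^ 4 + C ((1 + Real.sqrt 5) / 2) * (-X ^ 3 + X ^ 2 - X) + 1) := by
  have h5 : Real.sqrt 5 * Real.sqrt 5 = 5 := Real.mul_self_sqrt (by norm_num)
  have hexp := cyclotomic_expand_eq_cyclotomic_mul (p := 5) (n := 3) (by norm_num) (by norm_num) ℝ
  rw [cyclotomic_three] at hexp
  have hexp' : (X ^ 2 + X + 1 : ℝ[X]) * cyclotomic 15 ℝ = X ^ 10 + X ^ 5 + 1 := by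
    rw [mul_comm, ← hexp]
    simp [map_add, map_pow, Polynomial.expand_X, map_one]
    ring
  have hne : (X ^ 2 + X + 1 : ℝ[X]) ≠ 0 := by
    rw [← cyclotomic_three]; exact cyclotomic_ne_zero 3 ℝ
  apply mul_left_cancel₀ hne
  rw [hexp', aux_cyc15]
  · ring
  · linear_combination (-(1:ℝ)/4) * h5

/-- The fifteenth cyclotomic polynomial factors over the reals as
`Φ₁₅(X) = (X⁴ + ((1−√5)/2)(−X³ + X² − X) + 1)·(X⁴ + ((1+√5)/2)(−X³ + X² − X) + 1)`, and
`ζ₁₅ = e^{2πi/15}` is a root of the second factor `X⁴ + ((1+√5)/2)(−X³ + X² − X) + 1`. -/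
theorem cyclotomic_fifteen_factorization :
    cyclotomic 15 ℝ =
      (X ^ 4 + C ((1 - Real.sqrt 5) / 2) * (-X ^ 3 + X ^ 2 - X) + 1) *
        (X ^ 4 + C ((1 + Real.sqrt 5) / 2) * (-X ^ 3 + X ^ 2 - X) + 1) ∧
    Complex.exp (2 * Real.pi * Complex.I / 15) ^ 4 +
        (((1 + Real.sqrt 5) / 2 : ℝ) : ℂ) *
          (-Complex.exp (2 * Real.pi * Complex.I / 15) ^ 3 +
            Complex.exp (2 * Real.pi * Complex.I / 15) ^ 2 -
            Complex.exp (2 * Real.pi * Complex.I / 15)) + 1 = 0 := by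
  refine ⟨aux_part1, ?_⟩
  set ζ : ℂ := Complex.exp (2 * Real.pi * Complex.I / 15) with hζdef
  have hζne : ζ ≠ 0 := Complex.exp_ne_zero _
  have hprim : IsPrimitiveRoot ζ 15 := Complex.isPrimitiveRoot_exp 15 (by norm_num)
  have hroot : Polynomial.eval ζ (cyclotomic 15 ℂ) = 0 :=
    hprim.isRoot_cyclotomic (by norm_num)
  have hmap : cyclotomic 15 ℂ = map (algebraMap ℝ ℂ) (cyclotomic 15 ℝ) :=
    (map_cyclotomic 15 _).symm
  rw [hmap, aux_part1] at hroot
  simp only [Polynomial.map_mul, Polynomial.map_add, Polynomial.map_sub, Polynomial.map_neg,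
    Polynomial.map_pow, Polynomial.map_one, map_C, map_X, eval_mul, eval_add, eval_sub,
    eval_neg, eval_pow, eval_X, eval_one, eval_C, Complex.coe_algebraMap] at hroot
  -- hroot : v1 * v2 = 0
  have hI : (2 * (Real.pi : ℂ) * Complex.I / 15 : ℂ) =
      ((2 * Real.pi / 15 : ℝ) : ℂ) * Complex.I := by push_cast; ring
  set c : ℝ := Real.cos (2 * Real.pi / 15) with hcdef
  have hcos : ((c : ℝ) : ℂ) = (ζ + ζ⁻¹) / 2 := by
    rw [hcdef, Complex.ofReal_cos, Complex.cos, hζdef]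
    push_cast
    rw [show (2 * (Real.pi:ℂ) * Complex.I / 15) = ((2 * (Real.pi:ℂ) / 15) * Complex.I) by ring,
      ← Complex.exp_neg, neg_mul]
  set a : ℝ := (1 - Real.sqrt 5) / 2 with hadef
  have hv1 : ζ ^ 4 + ((a : ℝ) : ℂ) * (-ζ ^ 3 + ζ ^ 2 - ζ) + 1 =
      ζ ^ 2 * (((4 * c ^ 2 - 2 * a * c + a - 2 : ℝ)) : ℂ) := by
    push_cast
    rw [hcos]
    field_simp
    ring
  have h5 : Real.sqrt 5 * Real.sqrt 5 = 5 := Real.mul_self_sqrt (by norm_num)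
  have h3 : Real.sqrt 3 * Real.sqrt 3 = 3 := Real.mul_self_sqrt (by norm_num)
  have h5n : 0 ≤ Real.sqrt 5 := Real.sqrt_nonneg 5
  have h3n : 0 ≤ Real.sqrt 3 := Real.sqrt_nonneg 3
  have hπ : 0 < Real.pi := Real.pi_pos
  have hclt : Real.sqrt 3 / 2 < c := by
    rw [← Real.cos_pi_div_six, hcdef]
    exact Real.cos_lt_cos_of_nonneg_of_le_pi (by positivity) (by linarith) (by linarith)
  have hc1 : c ≤ 1 := Real.cos_le_one _
  have hr : (0 : ℝ) < 4 * c ^ 2 - 2 * a * c + a - 2 := by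
    have h51 : 1 < Real.sqrt 5 := by nlinarith
    have h53 : Real.sqrt 5 < 3 := by nlinarith
    have hcpos : 0 < c := by nlinarith
    rw [hadef]
    nlinarith [sq_nonneg (c - Real.sqrt 3 / 2), mul_pos (sub_pos.mpr h51) hcpos]
  have hv1ne : ζ ^ 4 + ((a : ℝ) : ℂ) * (-ζ ^ 3 + ζ ^ 2 - ζ) + 1 ≠ 0 := by
    rw [hv1]
    exact mul_ne_zero (pow_ne_zero _ hζne) (Complex.ofReal_ne_zero.mpr (ne_of_gt hr))
  rcases mul_eq_zero.mp hroot with h | h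
  · exact absurd h hv1ne
  · exact h
end

section
/- Let n ≥ 3 be an integer, let 1 ≤ i < n/2, and let η = e^{2πi/n}. Then there is a (unique) polynomial g ∈ ℂ[X] satisfying (X−1)(X−η^{i})(X−η^{−i})·g(X) = ((1−η^{i})(1−η^{−i})/n)·X(X+1)(X^{n}−1); moreover g has real coefficients, g has degree n−1, 0 is a simple root of g (i.e. X divides g but X² does not), and g(1) = 2. -/
/-!
Write `ζ = ηⁱ`. Since `ζⁿ = 1` and `ζ² ≠ 1` (as `0 < 2i < n`), the three roots `1, ζ, ζ⁻¹` of
`Xⁿ − 1` are distinct, so the cubic `P = (X − 1)(X − ζ)(X − ζ⁻¹)` divides `Xⁿ − 1 = P·d`, and the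
unique solution is `g = c·X(X + 1)·d` with `c = (1 − ζ)(1 − ζ⁻¹)/n`. Everything is then read off `d`:
`deg d = n − 3`; `d(0) ≠ 0` because `P(0)·d(0) = −1`; and `(1 − ζ)(1 − ζ⁻¹)·d(1) = n`, the value at
`1` of `(Xⁿ − 1)/(X − 1) = 1 + X + ⋯ + Xⁿ⁻¹`, so that `g(1) = 2`. The coefficients are real because
complex conjugation fixes `c` and swaps `ζ` and `ζ⁻¹ = conj ζ`, hence fixes `P` and the right-hand side.
-/

open Polynomial

section CommRing

variable {R : Type*} [CommRing R] {p q : R[X]} {n : ℕ}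

theorem eval_zero_ne_zero_of_mul_eq_X_pow_sub_one [Nontrivial R] (hn : n ≠ 0)
    (h : p * q = X ^ n - 1) : q.eval 0 ≠ 0 := by
  intro hq
  simpa [hq, hn] using congrArg (eval 0) h

variable [IsDomain R]

theorem natDegree_add_natDegree_of_mul_eq_X_pow_sub_one (hn : n ≠ 0) (h : p * q = X ^ n - 1) :
    p.natDegree + q.natDegree = n := by
  have hpq : p * q ≠ 0 := h ▸ by simpa using X_pow_sub_C_ne_zero (Nat.pos_of_ne_zero hn) (1 : R)
  rw [← natDegree_mul (left_ne_zero_of_mul hpq) (right_ne_zero_of_mul hpq), h]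
  simpa using natDegree_X_pow_sub_C (n := n) (r := (1 : R))

theorem eval_one_eq_of_X_sub_one_mul_eq (h : (X - 1) * q = X ^ n - 1) : q.eval 1 = n := by
  have hq : q = ∑ k ∈ Finset.range n, X ^ k :=
    mul_left_cancel₀ (by simpa using X_sub_C_ne_zero (1 : R)) (h.trans (mul_geom_sum X n).symm)
  simp [hq]

end CommRing

section Field

variable {K : Type*} [Field K]

theorem monic_X_sub_one_mul_X_sub_C_mul_X_sub_C_inv (ζ : K) :
    ((X - 1) * (X - C ζ) * (X - C ζ⁻¹)).Monic := by
  simpa using ((monic_X_sub_C 1).mul (monic_X_sub_C ζ)).mul (monic_X_sub_C ζ⁻¹)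

theorem natDegree_X_sub_one_mul_X_sub_C_mul_X_sub_C_inv (ζ : K) :
    ((X - 1) * (X - C ζ) * (X - C ζ⁻¹)).natDegree = 3 := by
  rw [← C_1, natDegree_mul (mul_ne_zero (X_sub_C_ne_zero 1) (X_sub_C_ne_zero ζ))
    (X_sub_C_ne_zero _), natDegree_mul (X_sub_C_ne_zero 1) (X_sub_C_ne_zero ζ)]
  simp only [natDegree_X_sub_C]

variable {ζ c : K} {n : ℕ} {d : K[X]}

theorem X_sub_one_mul_X_sub_C_mul_X_sub_C_inv_dvd (hζn : ζ ^ n = 1) (hζ2 : ζ ^ 2 ≠ 1) :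
    (X - 1) * (X - C ζ) * (X - C ζ⁻¹) ∣ (X ^ n - 1 : K[X]) := by
  rcases eq_or_ne n 0 with rfl | hn
  · simp
  have hζ0 : ζ ≠ 0 := by rintro rfl; simp [hn] at hζn
  have hζ1 : ζ ≠ 1 := by rintro rfl; simp at hζ2
  have hζinv : ζ ≠ ζ⁻¹ := fun h => hζ2 (by rw [sq]; nth_rw 2 [h]; exact mul_inv_cancel₀ hζ0)
  have root_dvd (a : K) (ha : a ^ n = 1) : X - C a ∣ (X ^ n - 1 : K[X]) :=
    dvd_iff_isRoot.2 (by simp [ha])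
  have coprime (a b : K) (hab : a ≠ b) : IsCoprime (X - C a) (X - C b) :=
    isCoprime_X_sub_C_of_isUnit_sub (sub_ne_zero.2 hab).isUnit
  rw [show (X - 1 : K[X]) = X - C 1 by rw [C_1]]
  have h1ζ : IsCoprime (X - C 1) (X - C ζ) := coprime 1 ζ hζ1.symm
  have h1ζinv : IsCoprime (X - C 1) (X - C ζ⁻¹) := coprime 1 ζ⁻¹ (inv_ne_one.2 hζ1).symm
  have hζζinv : IsCoprime (X - C ζ) (X - C ζ⁻¹) := coprime ζ ζ⁻¹ hζinv
  exact (h1ζinv.mul_left hζζinv).mul_dvd (h1ζ.mul_dvd (root_dvd 1 (one_pow n)) (root_dvd ζ hζn))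
    (root_dvd ζ⁻¹ (by rw [inv_pow, hζn, inv_one]))

theorem not_X_sq_dvd_C_mul_X_mul_X_add_one_mul {q : K[X]} (hc : c ≠ 0)
    (hq : q.eval 0 ≠ 0) : ¬ X ^ 2 ∣ C c * (X * (X + 1) * q) := by
  rw [show C c * (X * (X + 1) * q) = X * (C c * (X + 1) * q) by ring, sq,
    mul_dvd_mul_iff_left X_ne_zero, X_dvd_iff, coeff_zero_eq_eval_zero]
  simp [hc, hq]

theorem mul_eq_C_mul_X_mul_X_add_one_mul_X_pow_sub_one_iff
    (hd : (X - 1) * (X - C ζ) * (X - C ζ⁻¹) * d = X ^ n - 1) (g : K[X]) :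
    (X - 1) * (X - C ζ) * (X - C ζ⁻¹) * g = C c * (X * (X + 1) * (X ^ n - 1)) ↔
      g = C c * (X * (X + 1) * d) := by
  rw [← hd, show C c * (X * (X + 1) * ((X - 1) * (X - C ζ) * (X - C ζ⁻¹) * d)) =
      (X - 1) * (X - C ζ) * (X - C ζ⁻¹) * (C c * (X * (X + 1) * d)) by ring,
    mul_right_inj' (monic_X_sub_one_mul_X_sub_C_mul_X_sub_C_inv ζ).ne_zero]

theorem natDegree_C_mul_X_mul_X_add_one_mul_of_mul_eq (hc : c ≠ 0) (hn : n ≠ 0)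
    (hd : (X - 1) * (X - C ζ) * (X - C ζ⁻¹) * d = X ^ n - 1) :
    (C c * (X * (X + 1) * d)).natDegree = n - 1 := by
  have hdeg := natDegree_add_natDegree_of_mul_eq_X_pow_sub_one hn hd
  rw [natDegree_X_sub_one_mul_X_sub_C_mul_X_sub_C_inv] at hdeg
  have hd0 : d ≠ 0 := by
    have := eval_zero_ne_zero_of_mul_eq_X_pow_sub_one hn hd
    rintro rfl; simp at this
  rw [natDegree_C_mul hc, ← C_1, natDegree_mul (mul_ne_zero X_ne_zero (X_add_C_ne_zero 1)) hd0,
    natDegree_mul X_ne_zero (X_add_C_ne_zero 1), natDegree_X, natDegree_X_add_C]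
  omega

theorem eval_one_C_mul_X_mul_X_add_one_mul_of_mul_eq (hn : (n : K) ≠ 0)
    (hd : (X - 1) * (X - C ζ) * (X - C ζ⁻¹) * d = X ^ n - 1) :
    (C ((1 - ζ) * (1 - ζ⁻¹) / n) * (X * (X + 1) * d)).eval 1 = 2 := by
  have hd1 := eval_one_eq_of_X_sub_one_mul_eq (q := (X - C ζ) * (X - C ζ⁻¹) * d)
    (by rw [← hd, ← mul_assoc, ← mul_assoc])
  simp only [eval_mul, eval_sub, eval_X, eval_C] at hd1
  simp only [eval_mul, eval_C, eval_X, eval_add, eval_one]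
  field_simp
  linear_combination 2 * hd1

end Field

namespace Complex

open ComplexConjugate

theorem conj_eq_inv_of_pow_eq_one {ζ : ℂ} {n : ℕ} (h : ζ ^ n = 1) (hn : n ≠ 0) :
    conj ζ = ζ⁻¹ :=
  (inv_eq_conj (norm_eq_one_of_pow_eq_one h hn)).symm

theorem map_conj_X_sub_one_mul_X_sub_C_mul_X_sub_C_inv {ζ : ℂ} (h : conj ζ = ζ⁻¹) :
    ((X - 1) * (X - C ζ) * (X - C ζ⁻¹)).map (starRingEnd ℂ) =
      (X - 1) * (X - C ζ) * (X - C ζ⁻¹) := by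
  simp only [Polynomial.map_mul, Polynomial.map_sub, Polynomial.map_one, map_X, map_C, map_inv₀, h,
    inv_inv]
  ring

theorem map_conj_C_mul_X_mul_X_add_one_mul_X_pow_sub_one {ζ : ℂ} (h : conj ζ = ζ⁻¹)
    (n : ℕ) : (C ((1 - ζ) * (1 - ζ⁻¹) / n) * (X * (X + 1) * (X ^ n - 1))).map (starRingEnd ℂ) =
      C ((1 - ζ) * (1 - ζ⁻¹) / n) * (X * (X + 1) * (X ^ n - 1)) := by
  have hc : conj ((1 - ζ) * (1 - ζ⁻¹) / n) = (1 - ζ) * (1 - ζ⁻¹) / n := by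
    simp only [map_div₀, map_mul, map_sub, map_one, map_natCast, map_inv₀, h, inv_inv]
    ring
  simp only [Polynomial.map_mul, Polynomial.map_sub, Polynomial.map_add, Polynomial.map_pow,
    Polynomial.map_one, map_X, map_C, hc]

theorem map_conj_eq_of_mul_eq {p q g : ℂ[X]} (hp : p ≠ 0)
    (hpc : p.map (starRingEnd ℂ) = p) (hqc : q.map (starRingEnd ℂ) = q) (h : p * g = q) :
    g.map (starRingEnd ℂ) = g :=
  mul_left_cancel₀ hp <| by rw [← hpc, ← Polynomial.map_mul, hpc, h, hqc]

theorem im_coeff_eq_zero_of_map_conj_eq {g : ℂ[X]} (h : g.map (starRingEnd ℂ) = g)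
    (k : ℕ) : (g.coeff k).im = 0 :=
  conj_eq_iff_im.1 (by rw [← coeff_map, h])

end Complex

theorem genericDegree_phi2i_general (n : ℕ) (i : ℕ) (hi1 : 1 ≤ i) (hi2 : 2 * i < n)
    (η : ℂ) (hη : η = Complex.exp (2 * Real.pi * Complex.I / (n : ℂ))) :
    (∃! g : ℂ[X],
      (X - 1) * (X - C (η ^ i)) * (X - C ((η ^ i)⁻¹)) * g =
        C ((1 - η ^ i) * (1 - (η ^ i)⁻¹) / (n : ℂ)) * (X * (X + 1) * (X ^ n - 1))) ∧
    ∀ g : ℂ[X],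
      (X - 1) * (X - C (η ^ i)) * (X - C ((η ^ i)⁻¹)) * g =
        C ((1 - η ^ i) * (1 - (η ^ i)⁻¹) / (n : ℂ)) * (X * (X + 1) * (X ^ n - 1)) →
      (∀ k, (g.coeff k).im = 0) ∧ g.natDegree = n - 1 ∧
        ((X : ℂ[X]) ∣ g ∧ ¬ (X : ℂ[X]) ^ 2 ∣ g) ∧ g.eval 1 = 2 := by
  have hn0 : n ≠ 0 := by omega
  have hprim : IsPrimitiveRoot η n := hη ▸ Complex.isPrimitiveRoot_exp n hn0
  set ζ := η ^ i
  have hζn : ζ ^ n = 1 := by rw [pow_right_comm, hprim.pow_eq_one, one_pow]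
  have hζ2 : ζ ^ 2 ≠ 1 := by
    rw [← pow_mul]; exact hprim.pow_ne_one_of_pos_of_lt (by omega) (by omega)
  have hζ1 : ζ ≠ 1 := fun h => hζ2 (by rw [h, one_pow])
  have hc : (1 - ζ) * (1 - ζ⁻¹) / (n : ℂ) ≠ 0 := div_ne_zero (mul_ne_zero
    (sub_ne_zero.2 hζ1.symm) (sub_ne_zero.2 (inv_ne_one.2 hζ1).symm)) (Nat.cast_ne_zero.2 hn0)
  obtain ⟨d, hd⟩ := X_sub_one_mul_X_sub_C_mul_X_sub_C_inv_dvd hζn hζ2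
  replace hd := hd.symm
  have hsol := mul_eq_C_mul_X_mul_X_add_one_mul_X_pow_sub_one_iff
    (c := (1 - ζ) * (1 - ζ⁻¹) / n) hd
  refine ⟨⟨_, (hsol _).2 rfl, fun g hg => (hsol g).1 hg⟩, fun g hg => ⟨?_, ?_⟩⟩
  · have hconj := Complex.conj_eq_inv_of_pow_eq_one hζn hn0
    exact Complex.im_coeff_eq_zero_of_map_conj_eq <| Complex.map_conj_eq_of_mul_eq
      (monic_X_sub_one_mul_X_sub_C_mul_X_sub_C_inv ζ).ne_zero
      (Complex.map_conj_X_sub_one_mul_X_sub_C_mul_X_sub_C_inv hconj)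
      (Complex.map_conj_C_mul_X_mul_X_add_one_mul_X_pow_sub_one hconj n) hg
  obtain rfl := (hsol g).1 hg
  exact ⟨natDegree_C_mul_X_mul_X_add_one_mul_of_mul_eq hc hn0 hd,
    ⟨dvd_mul_of_dvd_right (dvd_mul_of_dvd_left (dvd_mul_right X _) _) _,
      not_X_sq_dvd_C_mul_X_mul_X_add_one_mul hc
        (eval_zero_ne_zero_of_mul_eq_X_pow_sub_one hn0 hd)⟩,
    eval_one_C_mul_X_mul_X_add_one_mul_of_mul_eq (Nat.cast_ne_zero.2 hn0) hd⟩

/-- For `n ≥ 3`, `1 ≤ i < n/2`, `η = e^{2πi/n}`, there is a unique polynomial `g ∈ ℂ[X]` with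
`(X−1)(X−ηⁱ)(X−η⁻ⁱ)·g = ((1−ηⁱ)(1−η⁻ⁱ)/n)·X(X+1)(Xⁿ−1)`; moreover `g` has real coefficients,
degree `n−1`, `0` is a simple root of `g`, and `g(1) = 2`. -/
theorem genericDegree_phi2i (n : ℕ) (hn : 3 ≤ n) (i : ℕ) (hi1 : 1 ≤ i) (hi2 : 2 * i < n)
    (η : ℂ) (hη : η = Complex.exp (2 * Real.pi * Complex.I / (n : ℂ))) :
    (∃! g : ℂ[X],
      (X - 1) * (X - C (η ^ i)) * (X - C ((η ^ i)⁻¹)) * g =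
        C ((1 - η ^ i) * (1 - (η ^ i)⁻¹) / (n : ℂ)) * (X * (X + 1) * (X ^ n - 1))) ∧
    ∀ g : ℂ[X],
      (X - 1) * (X - C (η ^ i)) * (X - C ((η ^ i)⁻¹)) * g =
        C ((1 - η ^ i) * (1 - (η ^ i)⁻¹) / (n : ℂ)) * (X * (X + 1) * (X ^ n - 1)) →
      (∀ k, (g.coeff k).im = 0) ∧ g.natDegree = n - 1 ∧
        ((X : ℂ[X]) ∣ g ∧ ¬ (X : ℂ[X]) ^ 2 ∣ g) ∧ g.eval 1 = 2 :=
  genericDegree_phi2i_general n i hi1 hi2 η hη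
end

section
/- Let n ≥ 3 be an integer, let 1 ≤ a < b < n−a be integers, and let η = e^{2πi/n}. Then there is a (unique) polynomial D ∈ ℂ[X] satisfying (X−η^{a})(X−η^{−a})(X−η^{b})(X−η^{−b})·D(X) = ((η^{a}+η^{−a}−η^{b}−η^{−b})/n)·X(X²−1)(X^{n}−1); moreover D has real coefficients, D has degree n−1 with positive leading coefficient (2cos(2πa/n) − 2cos(2πb/n))/n > 0, 0 is a simple root of D, and 1 is a root of D of multiplicity exactly 2. -/
/-!
The four roots `η^{±a}`, `η^{±b}` are `n`-th roots of unity, so the quartic divides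
`X (X² - 1) (Xⁿ - 1)` and `D` exists and is unique. Since `η̄ = η⁻¹` and the scalar is the real
number `(2 cos (2πa/n) - 2 cos (2πb/n)) / n`, the quartic and the right-hand side are fixed by
complex conjugation, hence so is `D`. Comparing monic parts gives the degree and the leading
coefficient, and as the quartic vanishes neither at `0` nor at `1`, `D` has there the
multiplicities `1` and `2` of `X (X² - 1) (Xⁿ - 1)`.
-/

open Polynomial
open scoped Real

namespace Polynomial

section CommRing

variable {R : Type*} [CommRing R]

theorem existsUnique_mul_eq_of_dvd [IsDomain R] {p r : R[X]} (hp : p ≠ 0) (h : p ∣ r) :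
    ∃! q, p * q = r := by
  obtain ⟨q, rfl⟩ := h
  exact ⟨q, rfl, fun _ h => mul_left_cancel₀ hp h⟩

theorem map_eq_self_of_mul_eq [IsDomain R] {σ : R →+* R} {p q r : R[X]} (hp : p ≠ 0)
    (hpσ : p.map σ = p) (hrσ : r.map σ = r) (h : p * q = r) : q.map σ = q :=
  mul_left_cancel₀ hp <| by rw [h, ← hrσ, ← h, Polynomial.map_mul, hpσ]

theorem leadingCoeff_eq_of_monic_mul_eq_C_mul [IsDomain R] {p q r : R[X]} {c : R}
    (hp : p.Monic) (hr : r.Monic) (h : p * q = C c * r) : q.leadingCoeff = c := by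
  simpa [hp.leadingCoeff, hr.leadingCoeff] using congrArg leadingCoeff h

theorem natDegree_add_eq_of_mul_eq_C_mul [IsDomain R] {p q r : R[X]} {c : R} (hp : p ≠ 0)
    (hc : c ≠ 0) (hr : r ≠ 0) (h : p * q = C c * r) :
    p.natDegree + q.natDegree = r.natDegree := by
  have hq : q ≠ 0 := by rintro rfl; simp_all
  simpa [natDegree_mul hp hq, natDegree_C_mul hc] using congrArg natDegree h

theorem rootMultiplicity_eq_of_mul_eq_C_mul [IsDomain R] {p q r : R[X]} {c x : R}
    (hp : p.eval x ≠ 0) (hc : c ≠ 0) (hr : r ≠ 0) (h : p * q = C c * r) :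
    q.rootMultiplicity x = r.rootMultiplicity x := by
  have hpq : p * q ≠ 0 := h ▸ mul_ne_zero (C_ne_zero.mpr hc) hr
  have := congrArg (rootMultiplicity x) h
  rwa [rootMultiplicity_mul hpq, rootMultiplicity_mul (h ▸ hpq), rootMultiplicity_eq_zero hp,
    rootMultiplicity_C, zero_add, zero_add] at this

theorem rootMultiplicity_mul_X_sub_C_pow_of_eval_ne_zero {p : R[X]} {x : R} (hp : p.eval x ≠ 0)
    (k : ℕ) : (p * (X - C x) ^ k).rootMultiplicity x = k := by
  rw [rootMultiplicity_mul_X_sub_C_pow (by rintro rfl; simp at hp), rootMultiplicity_eq_zero hp,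
    zero_add]

theorem monic_X_mul_X_sq_sub_one_mul_X_pow_sub_one [Nontrivial R] {n : ℕ} (hn : n ≠ 0) :
    (X * (X ^ 2 - 1) * (X ^ n - 1) : R[X]).Monic := by
  monicity!

theorem natDegree_X_mul_X_sq_sub_one_mul_X_pow_sub_one [Nontrivial R] {n : ℕ} (hn : n ≠ 0) :
    (X * (X ^ 2 - 1) * (X ^ n - 1) : R[X]).natDegree = n + 3 := by
  have h2 : (X ^ 2 - 1 : R[X]).Monic := by monicity!
  have hn' : (X ^ n - 1 : R[X]).Monic := by monicity!
  rw [(monic_X.mul h2).natDegree_mul hn', monic_X.natDegree_mul h2, ← C_1, natDegree_X_pow_sub_C,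
    natDegree_X_pow_sub_C, natDegree_X]
  omega

theorem rootMultiplicity_zero_X_mul_X_sq_sub_one_mul_X_pow_sub_one [Nontrivial R] {n : ℕ}
    (hn : n ≠ 0) : (X * (X ^ 2 - 1) * (X ^ n - 1) : R[X]).rootMultiplicity 0 = 1 := by
  have h : (X * (X ^ 2 - 1) * (X ^ n - 1) : R[X]) =
      ((X ^ 2 - 1) * (X ^ n - 1)) * (X - C 0) ^ 1 := by
    simp only [map_zero, sub_zero, pow_one]; ring
  rw [h, rootMultiplicity_mul_X_sub_C_pow_of_eval_ne_zero]
  simp [zero_pow hn]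

theorem rootMultiplicity_one_X_mul_X_sq_sub_one_mul_X_pow_sub_one [IsDomain R] [CharZero R]
    {n : ℕ} (hn : n ≠ 0) : (X * (X ^ 2 - 1) * (X ^ n - 1) : R[X]).rootMultiplicity 1 = 2 := by
  have h : (X * (X ^ 2 - 1) * (X ^ n - 1) : R[X]) =
      (X * (X + 1) * ∑ i ∈ Finset.range n, X ^ i) * (X - C 1) ^ 2 := by
    rw [← geom_sum_mul X n, C_1]; ring
  rw [h, rootMultiplicity_mul_X_sub_C_pow_of_eval_ne_zero]
  norm_num [eval_finsetSum, hn]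

end CommRing

end Polynomial

theorem IsPrimitiveRoot.prod_X_sub_C_pow_dvd {R : Type*} [CommRing R] [IsDomain R] {ζ : R}
    {n : ℕ} (h : IsPrimitiveRoot ζ n) {s : Finset ℕ} (hs : s ⊆ Finset.range n) :
    ∏ i ∈ s, (X - C (ζ ^ i)) ∣ X ^ n - 1 := by
  have hroots : (X ^ n - 1 : R[X]).roots = (Multiset.range n).map (ζ ^ ·) := by
    simpa [nthRoots] using h.nthRoots_eq (one_pow n)
  refine dvd_trans ?_ (prod_multiset_X_sub_C_dvd (X ^ n - 1))
  rw [hroots, Multiset.map_map]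
  exact Multiset.prod_dvd_prod_of_le (Multiset.map_le_map (Finset.val_le_iff.mpr hs))

section Field

variable {K : Type*} [Field K]

theorem IsPrimitiveRoot.inv_pow_eq_pow_sub {ζ : K} {n k : ℕ} (h : IsPrimitiveRoot ζ n)
    (hk : k ≤ n) : (ζ ^ k)⁻¹ = ζ ^ (n - k) :=
  inv_eq_of_mul_eq_one_right (by rw [← pow_add, Nat.add_sub_cancel' hk, h.pow_eq_one])

noncomputable def reciprocalPairsProd (z w : K) : K[X] :=
  (X - C z) * (X - C z⁻¹) * (X - C w) * (X - C w⁻¹)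

theorem reciprocalPairsProd_monic (z w : K) : (reciprocalPairsProd z w).Monic := by
  unfold reciprocalPairsProd; monicity!

theorem natDegree_reciprocalPairsProd (z w : K) : (reciprocalPairsProd z w).natDegree = 4 := by
  unfold reciprocalPairsProd; compute_degree!

theorem eval_zero_reciprocalPairsProd_ne_zero {z w : K} (hz : z ≠ 0) (hw : w ≠ 0) :
    (reciprocalPairsProd z w).eval 0 ≠ 0 := by
  simp [reciprocalPairsProd, hz, hw]

theorem eval_one_reciprocalPairsProd_ne_zero {z w : K} (hz : z ≠ 1) (hw : w ≠ 1) :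
    (reciprocalPairsProd z w).eval 1 ≠ 0 := by
  have hz' : z⁻¹ ≠ 1 := inv_ne_one.mpr hz
  have hw' : w⁻¹ ≠ 1 := inv_ne_one.mpr hw
  simp [reciprocalPairsProd, sub_eq_zero, hz.symm, hw.symm, hz'.symm, hw'.symm]

/-- When `b = n / 2` the root `ζ⁻ᵇ = ζᵇ = -1` is doubled, and its second copy is supplied by
`X ^ 2 - 1`. -/
theorem IsPrimitiveRoot.reciprocalPairsProd_pow_dvd {ζ : K} {n a b : ℕ} (h : IsPrimitiveRoot ζ n)
    (ha : 0 < a) (hab : a < b) (hb : a + b < n) :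
    reciprocalPairsProd (ζ ^ a) (ζ ^ b) ∣ (X ^ 2 - 1) * (X ^ n - 1) := by
  rw [reciprocalPairsProd, h.inv_pow_eq_pow_sub (by omega : a ≤ n),
    h.inv_pow_eq_pow_sub (by omega : b ≤ n)]
  have h3 := h.prod_X_sub_C_pow_dvd (s := {a, n - a, b}) (by intro; simp; omega)
  rw [Finset.prod_insert (by simp; omega), Finset.prod_insert (by simp; omega),
    Finset.prod_singleton, ← mul_assoc] at h3
  rcases eq_or_ne (n - b) b with hnb | hnb
  · have hneg : ζ ^ (n - b) = -1 :=
      (h.pow (by omega) (by omega : n = (n - b) * 2)).eq_neg_one_of_two_right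
    rw [mul_comm (X ^ 2 - 1)]
    refine mul_dvd_mul h3 ⟨X - 1, ?_⟩
    rw [hneg, map_neg, map_one]; ring
  · have h4 := h.prod_X_sub_C_pow_dvd (s := {a, n - a, b, n - b}) (by intro; simp; omega)
    rw [Finset.prod_insert (by simp; omega), Finset.prod_insert (by simp; omega),
      Finset.prod_insert (by simp; omega), Finset.prod_singleton, ← mul_assoc, ← mul_assoc] at h4
    exact h4.mul_left _

end Field

theorem map_conj_reciprocalPairsProd {z w : ℂ} (hz : ‖z‖ = 1) (hw : ‖w‖ = 1) :
    (reciprocalPairsProd z w).map (starRingEnd ℂ) = reciprocalPairsProd z w := by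
  simp only [reciprocalPairsProd, Polynomial.map_mul, Polynomial.map_sub, map_X, map_C, map_inv₀,
    ← Complex.inv_eq_conj hz, ← Complex.inv_eq_conj hw, inv_inv]
  ring

theorem Complex.exp_two_pi_I_div_pow_add_inv (n k : ℕ) :
    exp (2 * π * I / n) ^ k + (exp (2 * π * I / n) ^ k)⁻¹ =
      ((2 * Real.cos (2 * π * k / n) : ℝ) : ℂ) := by
  have : (k : ℂ) * (2 * π * I / n) = ↑(2 * π * k / n : ℝ) * I := by push_cast; ring
  rw [← exp_nat_mul, ← exp_neg, this, ← neg_mul, ofReal_mul, ofReal_ofNat, ofReal_cos, two_cos]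

theorem Real.cos_lt_cos_of_lt_of_add_lt_two_pi {x y : ℝ} (hx : 0 ≤ x) (hxy : x < y)
    (h : x + y < 2 * π) : cos y < cos x := by
  rcases le_or_gt y π with hy | hy
  · exact cos_lt_cos_of_nonneg_of_le_pi hx hy hxy
  · rw [← cos_two_pi_sub y]
    exact cos_lt_cos_of_nonneg_of_le_pi hx (by linarith) (by linarith)

theorem Real.cos_two_pi_mul_div_lt {n a b : ℕ} (hab : a < b) (hb : a + b < n) :
    cos (2 * π * b / n) < cos (2 * π * a / n) := by
  have hn : (0 : ℝ) < n := by exact_mod_cast (by omega : 0 < n)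
  have hab' : (a : ℝ) < b := by exact_mod_cast hab
  have hb' : (a + b : ℝ) < n := by exact_mod_cast hb
  apply cos_lt_cos_of_lt_of_add_lt_two_pi (by positivity)
  · gcongr
  · rw [← add_div, div_lt_iff₀ hn]; nlinarith [pi_pos]

theorem genericDegree_I2ab_general (n : ℕ) (a b : ℕ) (ha : 1 ≤ a) (hab : a < b)
    (hb : a + b < n) (η : ℂ) (hη : η = Complex.exp (2 * Real.pi * Complex.I / (n : ℂ))) :
    (∃! D : ℂ[X],
      (X - C (η ^ a)) * (X - C ((η ^ a)⁻¹)) * (X - C (η ^ b)) * (X - C ((η ^ b)⁻¹)) * D =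
        C ((η ^ a + (η ^ a)⁻¹ - η ^ b - (η ^ b)⁻¹) / (n : ℂ)) *
          (X * (X ^ 2 - 1) * (X ^ n - 1))) ∧
    ∀ D : ℂ[X],
      (X - C (η ^ a)) * (X - C ((η ^ a)⁻¹)) * (X - C (η ^ b)) * (X - C ((η ^ b)⁻¹)) * D =
        C ((η ^ a + (η ^ a)⁻¹ - η ^ b - (η ^ b)⁻¹) / (n : ℂ)) *
          (X * (X ^ 2 - 1) * (X ^ n - 1)) →
      (∀ k, (D.coeff k).im = 0) ∧ D.natDegree = n - 1 ∧
        D.leadingCoeff =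
          (((2 * Real.cos (2 * Real.pi * (a : ℝ) / (n : ℝ)) -
              2 * Real.cos (2 * Real.pi * (b : ℝ) / (n : ℝ))) / (n : ℝ) : ℝ) : ℂ) ∧
        0 < (2 * Real.cos (2 * Real.pi * (a : ℝ) / (n : ℝ)) -
              2 * Real.cos (2 * Real.pi * (b : ℝ) / (n : ℝ))) / (n : ℝ) ∧
        D.rootMultiplicity 0 = 1 ∧ D.rootMultiplicity 1 = 2 := by
  have hn0 : n ≠ 0 := by omega
  have hprim : IsPrimitiveRoot η n := hη ▸ Complex.isPrimitiveRoot_exp n hn0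
  have hnorm (k : ℕ) : ‖η ^ k‖ = 1 := by rw [norm_pow, hprim.norm'_eq_one hn0, one_pow]
  have hne_one {k : ℕ} (hk₀ : 0 < k) (hk : k < n) : η ^ k ≠ 1 :=
    hprim.pow_ne_one_of_pos_of_lt hk₀.ne' hk
  set c : ℝ := (2 * Real.cos (2 * Real.pi * (a : ℝ) / (n : ℝ)) -
    2 * Real.cos (2 * Real.pi * (b : ℝ) / (n : ℝ))) / (n : ℝ)
  have hc : (η ^ a + (η ^ a)⁻¹ - η ^ b - (η ^ b)⁻¹) / (n : ℂ) = c := by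
    rw [sub_sub, hη, Complex.exp_two_pi_I_div_pow_add_inv, Complex.exp_two_pi_I_div_pow_add_inv]
    simp only [c]; push_cast; ring
  have hc_pos : 0 < c := div_pos (by linarith [Real.cos_two_pi_mul_div_lt hab hb]) (by positivity)
  have hc0 : (c : ℂ) ≠ 0 := Complex.ofReal_ne_zero.mpr hc_pos.ne'
  have hP := reciprocalPairsProd_monic (η ^ a) (η ^ b)
  have hM := monic_X_mul_X_sq_sub_one_mul_X_pow_sub_one (R := ℂ) hn0
  have hdvd : reciprocalPairsProd (η ^ a) (η ^ b) ∣ X * (X ^ 2 - 1) * (X ^ n - 1) := by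
    rw [mul_assoc]; exact (hprim.reciprocalPairsProd_pow_dvd ha hab hb).mul_left X
  rw [hc]
  refine ⟨existsUnique_mul_eq_of_dvd hP.ne_zero (hdvd.mul_left _), fun D hD =>
    ⟨fun k => ?_, ?_, leadingCoeff_eq_of_monic_mul_eq_C_mul hP hM hD, hc_pos, ?_, ?_⟩⟩
  · have hconj := map_eq_self_of_mul_eq hP.ne_zero
      (map_conj_reciprocalPairsProd (hnorm a) (hnorm b)) (by simp) hD
    exact Complex.conj_eq_iff_im.mp (by rw [← coeff_map, hconj])
  · have := natDegree_add_eq_of_mul_eq_C_mul hP.ne_zero hc0 hM.ne_zero hD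
    rw [natDegree_reciprocalPairsProd, natDegree_X_mul_X_sq_sub_one_mul_X_pow_sub_one hn0] at this
    omega
  · rw [rootMultiplicity_eq_of_mul_eq_C_mul (eval_zero_reciprocalPairsProd_ne_zero
      (pow_ne_zero a (hprim.ne_zero hn0)) (pow_ne_zero b (hprim.ne_zero hn0))) hc0 hM.ne_zero hD]
    exact rootMultiplicity_zero_X_mul_X_sq_sub_one_mul_X_pow_sub_one hn0
  · rw [rootMultiplicity_eq_of_mul_eq_C_mul (eval_one_reciprocalPairsProd_ne_zero
      (hne_one ha (by omega)) (hne_one (by omega) (by omega))) hc0 hM.ne_zero hD]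
    exact rootMultiplicity_one_X_mul_X_sq_sub_one_mul_X_pow_sub_one hn0

/-- For `n ≥ 3`, `1 ≤ a < b < n−a`, `η = e^{2πi/n}`, there is a unique polynomial `D ∈ ℂ[X]`
with `(X−ηᵃ)(X−η⁻ᵃ)(X−ηᵇ)(X−η⁻ᵇ)·D = ((ηᵃ+η⁻ᵃ−ηᵇ−η⁻ᵇ)/n)·X(X²−1)(Xⁿ−1)`; moreover `D` has
real coefficients, degree `n−1` with positive leading coefficient
`(2cos(2πa/n) − 2cos(2πb/n))/n > 0`, `0` is a simple root of `D`, and `1` is a root of `D` of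
multiplicity exactly `2`. -/
theorem genericDegree_I2ab (n : ℕ) (hn : 3 ≤ n) (a b : ℕ) (ha : 1 ≤ a) (hab : a < b)
    (hb : a + b < n) (η : ℂ) (hη : η = Complex.exp (2 * Real.pi * Complex.I / (n : ℂ))) :
    (∃! D : ℂ[X],
      (X - C (η ^ a)) * (X - C ((η ^ a)⁻¹)) * (X - C (η ^ b)) * (X - C ((η ^ b)⁻¹)) * D =
        C ((η ^ a + (η ^ a)⁻¹ - η ^ b - (η ^ b)⁻¹) / (n : ℂ)) *
          (X * (X ^ 2 - 1) * (X ^ n - 1))) ∧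
    ∀ D : ℂ[X],
      (X - C (η ^ a)) * (X - C ((η ^ a)⁻¹)) * (X - C (η ^ b)) * (X - C ((η ^ b)⁻¹)) * D =
        C ((η ^ a + (η ^ a)⁻¹ - η ^ b - (η ^ b)⁻¹) / (n : ℂ)) *
          (X * (X ^ 2 - 1) * (X ^ n - 1)) →
      (∀ k, (D.coeff k).im = 0) ∧ D.natDegree = n - 1 ∧
        D.leadingCoeff =
          (((2 * Real.cos (2 * Real.pi * (a : ℝ) / (n : ℝ)) -
              2 * Real.cos (2 * Real.pi * (b : ℝ) / (n : ℝ))) / (n : ℝ) : ℝ) : ℂ) ∧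
        0 < (2 * Real.cos (2 * Real.pi * (a : ℝ) / (n : ℝ)) -
              2 * Real.cos (2 * Real.pi * (b : ℝ) / (n : ℝ))) / (n : ℝ) ∧
        D.rootMultiplicity 0 = 1 ∧ D.rootMultiplicity 1 = 2 :=
  genericDegree_I2ab_general n a b ha hab hb η hη
end

section
/- Let n ≥ 3, let 1 ≤ i < n/2, let η = e^{2πi/n}, and let g ∈ ℂ[X] be the polynomial with (X−1)(X−η^{i})(X−η^{−i})·g(X) = ((1−η^{i})(1−η^{−i})/n)·X(X+1)(X^{n}−1). Then g(η^{i}) = g(η^{−i}) = −1; consequently the quadratic (X−η^{i})(X−η^{−i}) divides both 1 + g(X) and X^{n} + g(X) in ℂ[X]. -/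
/-!
Write `ζ = ηⁱ`. Since `ζ` is a simple root of `(X - 1)(X - ζ)(X - ζ⁻¹)`, differentiating the
defining identity of `g` at `ζ` and using `ζ · ζⁿ⁻¹ = 1` gives
`(ζ - 1)(ζ - ζ⁻¹) g(ζ) = (1 - ζ)(1 - ζ⁻¹)(1 + ζ)`, and the left-hand factor is
`-(1 - ζ)(1 - ζ⁻¹)(1 + ζ)`, so `g(ζ) = -1`. The identity is symmetric under `ζ ↦ ζ⁻¹`, whence
`g(ζ⁻¹) = -1`. As `ζⁿ = 1`, both `1 + g` and `Xⁿ + g` then vanish at the distinct points `ζ, ζ⁻¹`.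
-/

open Polynomial

theorem Polynomial.eval_derivative_X_sub_C_mul {R : Type*} [CommRing R] (a : R) (p : R[X]) :
    (derivative ((X - C a) * p)).eval a = p.eval a := by
  simp

theorem Polynomial.mul_X_sub_C_dvd_of_isRoot {K : Type*} [Field K] {p : K[X]} {a b : K}
    (hab : a ≠ b) (ha : p.IsRoot a) (hb : p.IsRoot b) : (X - C a) * (X - C b) ∣ p :=
  (isCoprime_X_sub_C_of_isUnit_sub (sub_ne_zero.2 hab).isUnit).mul_dvd
    (dvd_iff_isRoot.2 ha) (dvd_iff_isRoot.2 hb)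

section GenericDegree

variable {K : Type*} [Field K]

theorem eval_derivative_X_mul_X_add_one_mul_X_pow_sub_one {n : ℕ} {ζ : K} (hζ : ζ ^ n = 1) :
    (derivative (X * (X + 1) * (X ^ n - 1))).eval ζ = n * (ζ + 1) := by
  rcases n with _ | n
  · simp
  · simp only [derivative_mul, derivative_X, derivative_add, derivative_one, derivative_sub,
      derivative_X_pow, eval_add, eval_mul, eval_X, eval_one, eval_zero, eval_sub, eval_pow,
      eval_C, hζ]
    rw [pow_succ] at hζ
    push_cast
    linear_combination (n + 1 : K) * (ζ + 1) * hζ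

/-- For `ζ = ηⁱ` this says that `g` is the generic degree `Deg(φ_{2,i})`. -/
def IsGenericDegreePhi2 (n : ℕ) (ζ : K) (g : K[X]) : Prop :=
  (X - 1) * (X - C ζ) * (X - C ζ⁻¹) * g =
    C ((1 - ζ) * (1 - ζ⁻¹) / n) * (X * (X + 1) * (X ^ n - 1))

namespace IsGenericDegreePhi2

variable {n : ℕ} {ζ : K} {g : K[X]}

theorem inv (hg : IsGenericDegreePhi2 n ζ g) : IsGenericDegreePhi2 n ζ⁻¹ g := by
  rw [IsGenericDegreePhi2, inv_inv, mul_right_comm (X - 1), hg, mul_comm (1 - ζ)]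

theorem eval_eq_neg_one (hg : IsGenericDegreePhi2 n ζ g) (hζn : ζ ^ n = 1) (hζ2 : ζ ^ 2 ≠ 1)
    (hn : (n : K) ≠ 0) : g.eval ζ = -1 := by
  have hζ0 : ζ ≠ 0 := by
    rintro rfl
    exact hn (by simp_all [zero_pow_eq_one₀])
  have hζ1 : ζ ≠ 1 := by
    rintro rfl
    simp at hζ2
  have key := congrArg (fun p => (derivative p).eval ζ) hg
  rw [show (X - 1) * (X - C ζ) * (X - C ζ⁻¹) * g = (X - C ζ) * ((X - 1) * (X - C ζ⁻¹) * g) by ring,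
    eval_derivative_X_sub_C_mul, derivative_C_mul, eval_C_mul,
    eval_derivative_X_mul_X_add_one_mul_X_pow_sub_one hζn] at key
  simp only [eval_mul, eval_sub, eval_X, eval_one, eval_C] at key
  field_simp at key
  apply mul_left_cancel₀ (sub_ne_zero.2 hζ2)
  linear_combination key

end IsGenericDegreePhi2

end GenericDegree

theorem phi2i_parity_general (n : ℕ) (i : ℕ) (hi1 : 1 ≤ i) (hi2 : 2 * i < n)
    (η : ℂ) (hη : η = Complex.exp (2 * Real.pi * Complex.I / (n : ℂ))) (g : ℂ[X])
    (hg : (X - 1) * (X - C (η ^ i)) * (X - C ((η ^ i)⁻¹)) * g =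
      C ((1 - η ^ i) * (1 - (η ^ i)⁻¹) / (n : ℂ)) * (X * (X + 1) * (X ^ n - 1))) :
    g.eval (η ^ i) = -1 ∧ g.eval ((η ^ i)⁻¹) = -1 ∧
      ((X - C (η ^ i)) * (X - C ((η ^ i)⁻¹)) ∣ 1 + g) ∧
      ((X - C (η ^ i)) * (X - C ((η ^ i)⁻¹)) ∣ X ^ n + g) := by
  have hprim : IsPrimitiveRoot η n := hη ▸ Complex.isPrimitiveRoot_exp n (by omega)
  set ζ := η ^ i
  have hg : IsGenericDegreePhi2 n ζ g := hg
  have hζ0 : ζ ≠ 0 := pow_ne_zero i (hprim.ne_zero (by omega))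
  have hζn : ζ ^ n = 1 := by rw [← pow_mul, mul_comm, pow_mul, hprim.pow_eq_one, one_pow]
  have hζ2 : ζ ^ 2 ≠ 1 := by
    rw [← pow_mul, mul_comm]
    exact hprim.pow_ne_one_of_pos_of_lt (by omega) hi2
  have hn : (n : ℂ) ≠ 0 := Nat.cast_ne_zero.2 (by omega)
  have hgζ : g.eval ζ = -1 := hg.eval_eq_neg_one hζn hζ2 hn
  have hgζ' : g.eval ζ⁻¹ = -1 :=
    hg.inv.eval_eq_neg_one (by rw [inv_pow, hζn, inv_one]) (by rwa [inv_pow, inv_ne_one]) hn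
  have hne : ζ ≠ ζ⁻¹ := by rwa [Ne, ← mul_eq_one_iff_eq_inv₀ hζ0, ← sq]
  refine ⟨hgζ, hgζ', mul_X_sub_C_dvd_of_isRoot hne ?_ ?_, mul_X_sub_C_dvd_of_isRoot hne ?_ ?_⟩ <;>
    simp [hgζ, hgζ', hζn]

/-- For `n ≥ 3`, `1 ≤ i < n/2`, `η = e^{2πi/n}`, and `g` the generic degree of `φ_{2,i}`, one has
`g(ηⁱ) = g(η⁻ⁱ) = −1`; consequently `(X−ηⁱ)(X−η⁻ⁱ)` divides both `1 + g` and `Xⁿ + g` in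
`ℂ[X]`. -/
theorem phi2i_parity (n : ℕ) (hn : 3 ≤ n) (i : ℕ) (hi1 : 1 ≤ i) (hi2 : 2 * i < n)
    (η : ℂ) (hη : η = Complex.exp (2 * Real.pi * Complex.I / (n : ℂ))) (g : ℂ[X])
    (hg : (X - 1) * (X - C (η ^ i)) * (X - C ((η ^ i)⁻¹)) * g =
      C ((1 - η ^ i) * (1 - (η ^ i)⁻¹) / (n : ℂ)) * (X * (X + 1) * (X ^ n - 1))) :
    g.eval (η ^ i) = -1 ∧ g.eval ((η ^ i)⁻¹) = -1 ∧
      ((X - C (η ^ i)) * (X - C ((η ^ i)⁻¹)) ∣ 1 + g) ∧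
      ((X - C (η ^ i)) * (X - C ((η ^ i)⁻¹)) ∣ X ^ n + g) :=
  phi2i_parity_general n i hi1 hi2 η hη g hg
end

section
/- Let n ≥ 3, let 1 ≤ a < b < n−a with b ≠ n/2, let η = e^{2πi/n}, and let D ∈ ℂ[X] be the polynomial with (X−η^{a})(X−η^{−a})(X−η^{b})(X−η^{−b})·D(X) = ((η^{a}+η^{−a}−η^{b}−η^{−b})/n)·X(X²−1)(X^{n}−1). Then D(η^{b}) = D(η^{−b}) = −1; consequently (X−η^{b})(X−η^{−b}) divides 1 + D(X) in ℂ[X]. -/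
open Polynomial

lemma aux_eval (n : ℕ) (hn : (n:ℂ) ≠ 0) (w z : ℂ) (hw : w ≠ 0) (hz0 : z ≠ 0) (hzn : z ^ n = 1)
    (h1 : z - w ≠ 0) (h2 : z - w⁻¹ ≠ 0) (h3 : z - z⁻¹ ≠ 0) (D : ℂ[X])
    (hD : (X - C w) * (X - C w⁻¹) * (X - C z) * (X - C z⁻¹) * D =
      C ((w + w⁻¹ - z - z⁻¹) / (n:ℂ)) * (X * (X ^ 2 - 1) * (X ^ n - 1))) :
    D.eval z = -1 := by
  have hn1 : 1 ≤ n := by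
    rcases n with _ | m
    · simp at hn
    · omega
  obtain ⟨q, hq⟩ : (X - C z) ∣ (X ^ n - 1 : ℂ[X]) :=
    dvd_iff_isRoot.2 (by simp [IsRoot, hzn])
  have hcancel : (X - C w) * (X - C w⁻¹) * (X - C z⁻¹) * D
      = C ((w + w⁻¹ - z - z⁻¹) / (n:ℂ)) * (X * (X ^ 2 - 1)) * q := by
    apply mul_left_cancel₀ (X_sub_C_ne_zero z)
    linear_combination hD + C ((w + w⁻¹ - z - z⁻¹) / (n:ℂ)) * (X * (X ^ 2 - 1)) * hq
  have hqz : q.eval z = (n:ℂ) * z ^ (n - 1) := by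
    have h := congrArg (fun p => Polynomial.eval z (Polynomial.derivative p)) hq
    simp [Polynomial.derivative_sub, Polynomial.derivative_X_pow] at h
    linear_combination -h
  have hz1 : z ^ (n - 1) = z⁻¹ := by
    have hm : z * z ^ (n - 1) = 1 := by
      rw [← pow_succ', Nat.sub_add_cancel hn1, hzn]
    exact (inv_eq_of_mul_eq_one_right hm).symm
  have hEv : (z - w) * (z - w⁻¹) * (z - z⁻¹) * D.eval z
      = ((w + w⁻¹ - z - z⁻¹) / (n:ℂ)) * (z * (z ^ 2 - 1)) * ((n:ℂ) * z ^ (n - 1)) := by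
    have h := congrArg (Polynomial.eval z) hcancel
    simp only [eval_mul, eval_sub, eval_X, eval_C, eval_pow, eval_one] at h
    rw [hqz] at h
    exact h
  have hA : (z - w) * (z - w⁻¹) * (z - z⁻¹) ≠ 0 :=
    mul_ne_zero (mul_ne_zero h1 h2) h3
  have key : (z - w) * (z - w⁻¹) * (z - z⁻¹) * D.eval z
      = (z - w) * (z - w⁻¹) * (z - z⁻¹) * (-1) := by
    rw [hEv, hz1]
    field_simp
    ring
  exact mul_left_cancel₀ hA key

/-- For `n ≥ 3`, `1 ≤ a < b < n−a` with `b ≠ n/2`, `η = e^{2πi/n}`, and `D` the generic degree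
of `I₂(n)[a,b]`, one has `D(ηᵇ) = D(η⁻ᵇ) = −1`; consequently `(X−ηᵇ)(X−η⁻ᵇ)` divides `1 + D`
in `ℂ[X]`. -/
theorem I2ab_minus_type (n : ℕ) (hn : 3 ≤ n) (a b : ℕ) (ha : 1 ≤ a) (hab : a < b)
    (hb : a + b < n) (hb2 : 2 * b ≠ n) (η : ℂ)
    (hη : η = Complex.exp (2 * Real.pi * Complex.I / (n : ℂ))) (D : ℂ[X])
    (hD : (X - C (η ^ a)) * (X - C ((η ^ a)⁻¹)) * (X - C (η ^ b)) * (X - C ((η ^ b)⁻¹)) * D =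
      C ((η ^ a + (η ^ a)⁻¹ - η ^ b - (η ^ b)⁻¹) / (n : ℂ)) *
        (X * (X ^ 2 - 1) * (X ^ n - 1))) :
    D.eval (η ^ b) = -1 ∧ D.eval ((η ^ b)⁻¹) = -1 ∧
      ((X - C (η ^ b)) * (X - C ((η ^ b)⁻¹)) ∣ 1 + D) := by
  have hn0 : n ≠ 0 := by omega
  have hnC : (n:ℂ) ≠ 0 := Nat.cast_ne_zero.2 hn0
  have hprim : IsPrimitiveRoot η n := by
    rw [hη]; exact Complex.isPrimitiveRoot_exp n hn0
  have hηn : η ^ n = 1 := hprim.pow_eq_one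
  have hη0 : η ≠ 0 := by
    intro h
    rw [h, zero_pow hn0] at hηn
    exact zero_ne_one hηn
  set w := η ^ a with hwdef
  set z := η ^ b with hzdef
  have hw0 : w ≠ 0 := pow_ne_zero _ hη0
  have hz0 : z ≠ 0 := pow_ne_zero _ hη0
  have hzn : z ^ n = 1 := by rw [hzdef, ← pow_mul, mul_comm, pow_mul, hηn, one_pow]
  have hwinv : w⁻¹ = η ^ (n - a) := by
    have hm : w * η ^ (n - a) = 1 := by
      rw [hwdef, ← pow_add, Nat.add_sub_cancel' (by omega : a ≤ n), hηn]
    exact inv_eq_of_mul_eq_one_right hm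
  have hzinv : z⁻¹ = η ^ (n - b) := by
    have hm : z * η ^ (n - b) = 1 := by
      rw [hzdef, ← pow_add, Nat.add_sub_cancel' (by omega : b ≤ n), hηn]
    exact inv_eq_of_mul_eq_one_right hm
  have hbn : b < n := by omega
  have haN : a < n := by omega
  have hinj : ∀ i j : ℕ, i < n → j < n → η ^ i = η ^ j → i = j := fun i j hi hj hij =>
    hprim.pow_inj hi hj hij
  have h1 : z - w ≠ 0 := by
    rw [sub_ne_zero]
    intro h
    exact absurd (hinj b a hbn haN h) (by omega)
  have h2 : z - w⁻¹ ≠ 0 := by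
    rw [sub_ne_zero, hwinv]
    intro h
    exact absurd (hinj b (n - a) hbn (by omega) h) (by omega)
  have h3 : z - z⁻¹ ≠ 0 := by
    rw [sub_ne_zero, hzinv]
    intro h
    exact absurd (hinj b (n - b) hbn (by omega) h) (by omega)
  have hDz : D.eval z = -1 :=
    aux_eval n hnC w z hw0 hz0 hzn h1 h2 h3 D hD
  -- second evaluation at z⁻¹
  have hzi0 : z⁻¹ ≠ 0 := inv_ne_zero hz0
  have hzin : (z⁻¹) ^ n = 1 := by rw [inv_pow, hzn, inv_one]
  have h1' : z⁻¹ - w ≠ 0 := by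
    rw [sub_ne_zero, hzinv]
    intro h
    exact absurd (hinj (n - b) a (by omega) haN h) (by omega)
  have h2' : z⁻¹ - w⁻¹ ≠ 0 := by
    rw [sub_ne_zero]
    intro h
    exact absurd (inv_injective h) (sub_ne_zero.1 h1)
  have h3' : z⁻¹ - (z⁻¹)⁻¹ ≠ 0 := by
    rw [inv_inv, sub_ne_zero]
    intro h
    exact (sub_ne_zero.1 h3) h.symm
  have hc : (w + w⁻¹ - z⁻¹ - (z⁻¹)⁻¹) = (w + w⁻¹ - z - z⁻¹) := by rw [inv_inv]; ring
  have hD' : (X - C w) * (X - C w⁻¹) * (X - C z⁻¹) * (X - C (z⁻¹)⁻¹) * D =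
      C ((w + w⁻¹ - z⁻¹ - (z⁻¹)⁻¹) / (n:ℂ)) * (X * (X ^ 2 - 1) * (X ^ n - 1)) := by
    rw [hc, inv_inv]
    linear_combination hD
  have hDzi : D.eval z⁻¹ = -1 := aux_eval n hnC w z⁻¹ hw0 hzi0 hzin h1' h2' h3' D hD'
  have d1 : (X - C z) ∣ 1 + D := dvd_iff_isRoot.2 (by simp [IsRoot, hDz])
  have d2 : (X - C z⁻¹) ∣ 1 + D := dvd_iff_isRoot.2 (by simp [IsRoot, hDzi])
  have hcop : IsCoprime (X - C z) (X - C (z⁻¹)) := by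
    apply Polynomial.isCoprime_X_sub_C_of_isUnit_sub
    exact isUnit_iff_ne_zero.2 (by intro h; exact (sub_ne_zero.1 h3) (sub_eq_zero.1 h))
  exact ⟨hDz, hDzi, hcop.mul_dvd d1 d2⟩
end

section
/- Let n ≥ 3, let 1 ≤ i < n/2, let η = e^{2πi/n}, and let g ∈ ℂ[X] be the polynomial with (X−1)(X−η^{i})(X−η^{−i})·g(X) = ((1−η^{i})(1−η^{−i})/n)·X(X+1)(X^{n}−1). Then the number of roots of g in ℂ, counted with multiplicity, whose argument (taken in [0,2π)) lies in the open interval (0, 2πi/n) equals i − 1, and the number of roots of g, counted with multiplicity, whose argument lies in the open interval (0, 2π(n−i)/n) equals n − i − 1. Consequently, since a(g) + A(g) = n and 1 is not a root of g, the perversity function values are π_{κ/d}(φ_{2,i}) = 2i − 1 for κ/d = i/n and π_{κ/d}(φ_{2,i}) = 2(n−i) − 1 for κ/d = (n−i)/n. -/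
open Polynomial

/-- The argument of a complex number taken in `[0, 2π)`. -/
noncomputable def arg2pi (z : ℂ) : ℝ :=
  if 0 ≤ Complex.arg z then Complex.arg z else Complex.arg z + 2 * Real.pi

/-!
The roots of `X (X + 1) (X ^ n - 1)` are `0`, `-1` and the powers `η ^ k`, `k < n`, each simple;
dividing by `(X - 1) (X - η ^ i) (X - η ^ (n - i))` removes the powers with `k ∈ {0, i, n - i}`.
Since `arg2pi (η ^ k) = 2πk/n`, the roots of `g` with argument in `(0, 2πb/n)` are the `η ^ k` with
`0 < k < b`, `k ∉ {i, n - i}`, together with `-1` exactly when `n < 2b`. For `b = i` this leaves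
`i - 1` roots; for `b = n - i` it leaves `n - i - 2` powers plus `-1`.
-/

open Finset
open scoped Real

theorem Finset.val_map_eq_add_sdiff {α β : Type*} [DecidableEq α] {s t : Finset α} (h : t ⊆ s)
    (f : α → β) : s.val.map f = t.val.map f + (s \ t).val.map f := by
  rw [← Multiset.map_add, sdiff_val, add_tsub_cancel_of_le (val_le_iff.2 h)]

theorem IsPrimitiveRoot.roots_X_pow_sub_one {R : Type*} [CommRing R] [IsDomain R] {η : R} {n : ℕ}
    (h : IsPrimitiveRoot η n) : (X ^ n - 1 : R[X]).roots = (range n).val.map (η ^ ·) := by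
  simpa [nthRoots] using h.nthRoots_eq (one_pow n)

theorem IsPrimitiveRoot.one_notMem_map_pow {R : Type*} [CommMonoid R] {η : R} {n : ℕ}
    (h : IsPrimitiveRoot η n) {s : Finset ℕ} (hs : s ⊆ range n) (h0 : 0 ∉ s) :
    1 ∉ s.val.map (η ^ ·) := by
  simp only [Multiset.mem_map, mem_val, not_exists, not_and]
  intro k hk hk1
  exact h0 (Nat.eq_zero_of_dvd_of_lt (h.pow_eq_one_iff_dvd k |>.1 hk1) (mem_range.1 (hs hk)) ▸ hk)

theorem IsPrimitiveRoot.one_sub_pow_mul_one_sub_inv_ne_zero {K : Type*} [Field K] {η : K}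
    {n i : ℕ} (h : IsPrimitiveRoot η n) (hi : 0 < i) (hin : i < n) :
    (1 - η ^ i) * (1 - (η ^ i)⁻¹) ≠ 0 := by
  have hpow : η ^ i ≠ 1 := h.pow_ne_one_of_pos_of_lt hi.ne' hin
  exact mul_ne_zero (sub_ne_zero.2 hpow.symm) (sub_ne_zero.2 (inv_ne_one.2 hpow).symm)

section RangeSdiff

variable {n i : ℕ}

theorem insert_zero_insert_sub_subset_range (hi : 0 < i) (hin : 2 * i < n) :
    ({0, i, n - i} : Finset ℕ) ⊆ range n := by
  intro k
  simp only [mem_insert, mem_singleton, mem_range]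
  omega

theorem range_sdiff_subset_range : range n \ {0, i, n - i} ⊆ range n := sdiff_subset

theorem card_range_sdiff (hi : 0 < i) (hin : 2 * i < n) :
    #(range n \ {0, i, n - i}) = n - 3 := by
  rw [card_sdiff_of_subset (insert_zero_insert_sub_subset_range hi hin), card_range,
    card_insert_of_notMem (by simp only [mem_insert, mem_singleton]; omega),
    card_insert_of_notMem (by simp only [mem_singleton]; omega), card_singleton]

theorem filter_range_sdiff_lt (hin : 2 * i < n) :
    (range n \ {0, i, n - i}).filter (fun k => 0 < k ∧ k < i) = Ioo 0 i := by
  ext k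
  simp only [mem_filter, mem_sdiff, mem_range, mem_insert, mem_singleton, mem_Ioo]
  omega

theorem filter_range_sdiff_lt_sub (hin : 2 * i < n) :
    (range n \ {0, i, n - i}).filter (fun k => 0 < k ∧ k < n - i) = (Ioo 0 (n - i)).erase i := by
  ext k
  simp only [mem_filter, mem_sdiff, mem_range, mem_insert, mem_singleton, mem_erase, mem_Ioo]
  omega

end RangeSdiff

theorem roots_eq_of_mul_eq_X_mul_X_add_one_mul_X_pow_sub_one {K : Type*} [Field K] {η : K}
    {n i : ℕ} (hη : IsPrimitiveRoot η n) (hi : 0 < i) (hin : 2 * i < n) {c : K} (hc : c ≠ 0)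
    {g : K[X]} (hg : (X - 1) * (X - C (η ^ i)) * (X - C ((η ^ i)⁻¹)) * g =
      C c * (X * (X + 1) * (X ^ n - 1))) :
    g.roots = 0 ::ₘ (-1) ::ₘ (range n \ {0, i, n - i}).val.map (η ^ ·) := by
  have hinv : (η ^ i)⁻¹ = η ^ (n - i) := inv_eq_of_mul_eq_one_right <| by
    rw [← pow_add, Nat.add_sub_cancel' (by omega), hη.pow_eq_one]
  have hT : ({0, i, n - i} : Finset ℕ).val.map (η ^ ·) = {1, η ^ i, (η ^ i)⁻¹} := by
    rw [hinv, insert_val_of_notMem (by simp only [mem_insert, mem_singleton]; omega),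
      insert_val_of_notMem (by simp only [mem_singleton]; omega)]
    simp
  have hP : ((X - 1) * (X - C (η ^ i)) * (X - C ((η ^ i)⁻¹)) : K[X]).roots =
      {1, η ^ i, (η ^ i)⁻¹} := by
    rw [show ((X - 1) * (X - C (η ^ i)) * (X - C ((η ^ i)⁻¹)) : K[X]) =
        (({1, η ^ i, (η ^ i)⁻¹} : Multiset K).map (X - C ·)).prod by simp [mul_assoc],
      roots_multiset_prod_X_sub_C]
  have hq : (X * (X + 1) * (X ^ n - 1) : K[X]) ≠ 0 := by
    refine ((monic_X.mul (monic_X_add_C 1)).mul ?_).ne_zero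
    simpa using monic_X_pow_sub_C (1 : K) (by omega : n ≠ 0)
  have hne := hg ▸ mul_ne_zero (C_ne_zero.2 hc) hq
  have h := congrArg roots hg
  rw [roots_mul hne, roots_C_mul _ hc, roots_mul hq, roots_mul (left_ne_zero_of_mul hq), roots_X,
    hη.roots_X_pow_sub_one, val_map_eq_add_sdiff (insert_zero_insert_sub_subset_range hi hin),
    hT, hP, show (X + 1 : K[X]) = X - C (-1) by simp, roots_X_sub_C] at h
  refine add_left_cancel (h.trans ?_)
  simp only [Multiset.singleton_add, Multiset.cons_add, Multiset.add_cons]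

section OfRootsEq

variable {K : Type*} [Field K] {η : K} {n i : ℕ} {g : K[X]}

theorem natDegree_eq_of_roots_eq [IsAlgClosed K] (hi : 0 < i) (hin : 2 * i < n)
    (hroots : g.roots = 0 ::ₘ (-1) ::ₘ (range n \ {0, i, n - i}).val.map (η ^ ·)) :
    g.natDegree = n - 1 := by
  rw [← IsAlgClosed.card_roots_eq_natDegree, hroots, Multiset.card_cons, Multiset.card_cons,
    Multiset.card_map, ← card_def, card_range_sdiff hi hin]
  omega

theorem rootMultiplicity_zero_eq_one_of_roots_eq (hη : η ≠ 0)
    (hroots : g.roots = 0 ::ₘ (-1) ::ₘ (range n \ {0, i, n - i}).val.map (η ^ ·)) :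
    g.rootMultiplicity 0 = 1 := by
  classical
  rw [← count_roots, hroots]
  simp [hη]

theorem rootMultiplicity_one_eq_zero_of_roots_eq [CharZero K] (hη : IsPrimitiveRoot η n)
    (hroots : g.roots = 0 ::ₘ (-1) ::ₘ (range n \ {0, i, n - i}).val.map (η ^ ·)) :
    g.rootMultiplicity 1 = 0 := by
  classical
  rw [← count_roots, hroots, Multiset.count_cons_of_ne one_ne_zero,
    Multiset.count_cons_of_ne (by norm_num),
    Multiset.count_eq_zero.2 (hη.one_notMem_map_pow range_sdiff_subset_range (by simp))]

end OfRootsEq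

theorem arg2pi_exp_mul_I {θ : ℝ} (h0 : 0 ≤ θ) (h2 : θ < 2 * π) :
    arg2pi (Complex.exp (θ * Complex.I)) = θ := by
  rw [arg2pi, Complex.arg_exp_mul_I]
  rcases le_or_gt θ π with h | h
  · rw [(toIocMod_eq_self _).2 ⟨by linarith [Real.pi_pos], by linarith⟩, if_pos h0]
  · have hmod : toIocMod Real.two_pi_pos (-π) θ = θ - 2 * π :=
      (toIocMod_eq_iff _).2 ⟨⟨by linarith, by linarith⟩, 1, by simp⟩
    rw [hmod, if_neg (by linarith)]
    ring

theorem arg2pi_zero : arg2pi 0 = 0 := by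
  simp [arg2pi]

theorem arg2pi_neg_one : arg2pi (-1) = π := by
  simp [arg2pi, Real.pi_pos.le]

theorem arg2pi_exp_two_pi_I_div_pow {n k : ℕ} (hk : k < n) :
    arg2pi (Complex.exp (2 * π * Complex.I / n) ^ k) = 2 * π * k / n := by
  have hn : (0 : ℝ) < n := by exact_mod_cast hk.trans_le' k.zero_le
  rw [← Complex.exp_nat_mul, show (k : ℂ) * (2 * π * Complex.I / n) =
      ((2 * π * k / n : ℝ) : ℂ) * Complex.I by push_cast; ring]
  refine arg2pi_exp_mul_I (by positivity) ?_
  rw [div_lt_iff₀ hn]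
  have : (k : ℝ) < n := by exact_mod_cast hk
  nlinarith [Real.pi_pos]

theorem card_filter_arg2pi_map_exp_pow {n : ℕ} (b : ℕ) {s : Finset ℕ} (hs : s ⊆ range n) :
    ((s.val.map (Complex.exp (2 * π * Complex.I / n) ^ ·)).filter
        (fun z => 0 < arg2pi z ∧ arg2pi z < 2 * π * b / n)).card =
      #(s.filter (fun k => 0 < k ∧ k < b)) := by
  rw [Multiset.filter_map, Multiset.card_map, card_def, filter_val]
  congr 1
  refine Multiset.filter_congr fun k hk => ?_
  have hkn := mem_range.1 (hs hk)
  have hn : (0 : ℝ) < n := by exact_mod_cast hkn.trans_le' k.zero_le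
  simp only [Function.comp, arg2pi_exp_two_pi_I_div_pow hkn]
  rw [div_lt_div_iff_of_pos_right hn, mul_lt_mul_iff_right₀ Real.two_pi_pos, Nat.cast_lt,
    div_pos_iff_of_pos_right hn, mul_pos_iff_of_pos_left Real.two_pi_pos, Nat.cast_pos]

theorem pi_lt_two_pi_mul_div_iff {n : ℕ} (hn : 0 < n) (b : ℕ) :
    π < 2 * π * b / n ↔ n < 2 * b := by
  rw [lt_div_iff₀ (by exact_mod_cast hn), mul_assoc, mul_left_comm,
    mul_lt_mul_iff_right₀ Real.pi_pos]
  exact_mod_cast Iff.rfl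

theorem card_filter_arg2pi_zero_neg_one_exp_pow {n : ℕ} (hn : 0 < n) (b : ℕ) {s : Finset ℕ}
    (hs : s ⊆ range n) :
    ((0 ::ₘ (-1) ::ₘ s.val.map (Complex.exp (2 * π * Complex.I / n) ^ ·)).filter
        (fun z => 0 < arg2pi z ∧ arg2pi z < 2 * π * b / n)).card =
      #(s.filter (fun k => 0 < k ∧ k < b)) + if n < 2 * b then 1 else 0 := by
  have hneg : (0 < arg2pi (-1) ∧ arg2pi (-1) < 2 * π * b / n) ↔ n < 2 * b := by
    rw [arg2pi_neg_one, pi_lt_two_pi_mul_div_iff hn]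
    exact and_iff_right Real.pi_pos
  rw [Multiset.filter_cons_of_neg _ (by simp [arg2pi_zero])]
  by_cases h : n < 2 * b
  · rw [Multiset.filter_cons_of_pos _ (by exact hneg.2 h), Multiset.card_cons,
      card_filter_arg2pi_map_exp_pow b hs, if_pos h]
  · rw [Multiset.filter_cons_of_neg _ (by exact not_congr hneg |>.2 h),
      card_filter_arg2pi_map_exp_pow b hs, if_neg h, add_zero]

open Classical in
theorem phi2i_perversity_general (n : ℕ) (i : ℕ) (hi1 : 1 ≤ i) (hi2 : 2 * i < n)
    (η : ℂ) (hη : η = Complex.exp (2 * Real.pi * Complex.I / (n : ℂ))) (g : ℂ[X])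
    (hg : (X - 1) * (X - C (η ^ i)) * (X - C ((η ^ i)⁻¹)) * g =
      C ((1 - η ^ i) * (1 - (η ^ i)⁻¹) / (n : ℂ)) * (X * (X + 1) * (X ^ n - 1))) :
    (g.roots.filter
        (fun z => 0 < arg2pi z ∧ arg2pi z < 2 * Real.pi * (i : ℝ) / (n : ℝ))).card = i - 1 ∧
    (g.roots.filter
        (fun z => 0 < arg2pi z ∧
          arg2pi z < 2 * Real.pi * ((n - i : ℕ) : ℝ) / (n : ℝ))).card = n - i - 1 ∧
    g.rootMultiplicity 0 + g.natDegree = n ∧ g.eval 1 ≠ 0 ∧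
    ((i : ℝ) / (n : ℝ)) * ((g.rootMultiplicity 0 : ℝ) + (g.natDegree : ℝ)) +
        ((g.roots.filter
          (fun z => 0 < arg2pi z ∧ arg2pi z < 2 * Real.pi * (i : ℝ) / (n : ℝ))).card : ℝ) +
        (g.rootMultiplicity 1 : ℝ) / 2 = 2 * (i : ℝ) - 1 ∧
    (((n - i : ℕ) : ℝ) / (n : ℝ)) * ((g.rootMultiplicity 0 : ℝ) + (g.natDegree : ℝ)) +
        ((g.roots.filter
          (fun z => 0 < arg2pi z ∧
            arg2pi z < 2 * Real.pi * ((n - i : ℕ) : ℝ) / (n : ℝ))).card : ℝ) +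
        (g.rootMultiplicity 1 : ℝ) / 2 = 2 * ((n - i : ℕ) : ℝ) - 1 := by
  have hn0 : 0 < n := by omega
  have hprim : IsPrimitiveRoot η n := hη ▸ Complex.isPrimitiveRoot_exp n hn0.ne'
  have hc : (1 - η ^ i) * (1 - (η ^ i)⁻¹) / (n : ℂ) ≠ 0 :=
    div_ne_zero (hprim.one_sub_pow_mul_one_sub_inv_ne_zero hi1 (by omega)) (Nat.cast_ne_zero.2 hn0.ne')
  have hroots := roots_eq_of_mul_eq_X_mul_X_add_one_mul_X_pow_sub_one hprim hi1 hi2 hc hg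
  have hg0 : g ≠ 0 := by rintro rfl; simp at hroots
  have hcount₁ : (g.roots.filter
      (fun z => 0 < arg2pi z ∧ arg2pi z < 2 * π * (i : ℝ) / n)).card = i - 1 := by
    rw [hroots, hη, card_filter_arg2pi_zero_neg_one_exp_pow hn0 i range_sdiff_subset_range,
      filter_range_sdiff_lt hi2, if_neg (by omega), Nat.card_Ioo]
    rfl
  have hcount₂ : (g.roots.filter
      (fun z => 0 < arg2pi z ∧ arg2pi z < 2 * π * ((n - i : ℕ) : ℝ) / n)).card = n - i - 1 := by
    rw [hroots, hη, card_filter_arg2pi_zero_neg_one_exp_pow hn0 _ range_sdiff_subset_range,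
      filter_range_sdiff_lt_sub hi2, if_pos (by omega), card_erase_of_mem (by rw [mem_Ioo]; omega),
      Nat.card_Ioo]
    omega
  have hdeg := natDegree_eq_of_roots_eq hi1 hi2 hroots
  have hmult₀ := rootMultiplicity_zero_eq_one_of_roots_eq (hprim.ne_zero hn0.ne') hroots
  have hmult₁ := rootMultiplicity_one_eq_zero_of_roots_eq hprim hroots
  have heval : g.eval 1 ≠ 0 := fun h => by simpa [hmult₁] using (rootMultiplicity_pos hg0).2 h
  have hsum : g.rootMultiplicity 0 + g.natDegree = n := by omega
  have hnR : (n : ℝ) ≠ 0 := by exact_mod_cast hn0.ne'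
  refine ⟨hcount₁, hcount₂, hsum, heval, ?_, ?_⟩ <;>
    rw [← Nat.cast_add, hsum, hmult₁, Nat.cast_zero, zero_div, add_zero, div_mul_cancel₀ _ hnR]
  · rw [hcount₁, Nat.cast_sub hi1]
    ring
  · rw [hcount₂, Nat.cast_sub (show 1 ≤ n - i by omega)]
    ring

open Classical in
/-- For `n ≥ 3`, `1 ≤ i < n/2`, `η = e^{2πi/n}`, and `g` the generic degree of `φ_{2,i}`: the
number of roots of `g` (with multiplicity) with argument in `(0, 2πi/n)` is `i − 1`, the number
with argument in `(0, 2π(n−i)/n)` is `n − i − 1`; consequently, since `a(g) + A(g) = n` and `1`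
is not a root of `g`, the perversity values are `π_{i/n}(φ_{2,i}) = 2i − 1` and
`π_{(n−i)/n}(φ_{2,i}) = 2(n−i) − 1`. -/
theorem phi2i_perversity (n : ℕ) (hn : 3 ≤ n) (i : ℕ) (hi1 : 1 ≤ i) (hi2 : 2 * i < n)
    (η : ℂ) (hη : η = Complex.exp (2 * Real.pi * Complex.I / (n : ℂ))) (g : ℂ[X])
    (hg : (X - 1) * (X - C (η ^ i)) * (X - C ((η ^ i)⁻¹)) * g =
      C ((1 - η ^ i) * (1 - (η ^ i)⁻¹) / (n : ℂ)) * (X * (X + 1) * (X ^ n - 1))) :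
    (g.roots.filter
        (fun z => 0 < arg2pi z ∧ arg2pi z < 2 * Real.pi * (i : ℝ) / (n : ℝ))).card = i - 1 ∧
    (g.roots.filter
        (fun z => 0 < arg2pi z ∧
          arg2pi z < 2 * Real.pi * ((n - i : ℕ) : ℝ) / (n : ℝ))).card = n - i - 1 ∧
    g.rootMultiplicity 0 + g.natDegree = n ∧ g.eval 1 ≠ 0 ∧
    ((i : ℝ) / (n : ℝ)) * ((g.rootMultiplicity 0 : ℝ) + (g.natDegree : ℝ)) +
        ((g.roots.filter
          (fun z => 0 < arg2pi z ∧ arg2pi z < 2 * Real.pi * (i : ℝ) / (n : ℝ))).card : ℝ) +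
        (g.rootMultiplicity 1 : ℝ) / 2 = 2 * (i : ℝ) - 1 ∧
    (((n - i : ℕ) : ℝ) / (n : ℝ)) * ((g.rootMultiplicity 0 : ℝ) + (g.natDegree : ℝ)) +
        ((g.roots.filter
          (fun z => 0 < arg2pi z ∧
            arg2pi z < 2 * Real.pi * ((n - i : ℕ) : ℝ) / (n : ℝ))).card : ℝ) +
        (g.rootMultiplicity 1 : ℝ) / 2 = 2 * ((n - i : ℕ) : ℝ) - 1 :=
  phi2i_perversity_general n i hi1 hi2 η hη g hg
end

section
/- Let n ≥ 3, let η = e^{2πi/n}, and let S be the list of polynomials 1, q, q², together with η^{j}q for j = 2, 3, …, n−2 (the parameters of the cyclotomic Hecke algebra of the principal Φ_n^{(1)}-block of I₂(n,q)). Then one has the identity in ℂ[q]: (∏_{u ∈ S, u ≠ 1} u) · ∏_{u ∈ S, u ≠ q²} (q² − u) = q^{n} · (∏_{u ∈ S, u ≠ q²} u) · ∏_{u ∈ S, u ≠ 1} (1 − u). Equivalently, the relative degrees R_v = ∏_{u ∈ S, u ≠ v} u/(v − u) attached to the parameters v = 1 and v = q² satisfy R_1 = q^{n} · R_{q²} as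 rational functions in q. -/
/-!
Writing `1 - ηʲq = -ηʲ (q - η^(n-j))` and reindexing by `j ↦ n - j` gives
`∏ⱼ (1 - ηʲq) = ε · ∏ⱼ (q - ηʲ)` with `ε = ∏ⱼ (-ηʲ)`, the products running over `2 ≤ j ≤ n - 2`.
Evaluating `Xⁿ - 1 = ∏_{j<n} (X - ηʲ)` at `0` shows `∏_{1≤j<n} (-ηʲ) = 1`, and the two factors
`-η`, `-η^(n-1)` missing from `ε` multiply to `ηⁿ = 1`, so `ε = 1`. As `q² - ηʲq = q (q - ηʲ)`,
both sides of the identity become the same polynomial.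
-/

open Polynomial Finset

namespace Polynomial

lemma one_sub_C_mul_X_of_mul_eq_one {R : Type*} [CommRing R] {a b : R} (hab : a * b = 1) :
    1 - C a * X = C (-a) * (X - C b) := by
  rw [mul_sub, ← C_mul, neg_mul, hab, map_neg, map_neg, map_one]
  ring

end Polynomial

namespace Finset

lemma prod_Icc_reflect {M : Type*} [CommMonoid M] (f : ℕ → M) (a n : ℕ) :
    ∏ j ∈ Icc a (n - a), f (n - j) = ∏ j ∈ Icc a (n - a), f j := by
  refine prod_nbij' (n - ·) (n - ·) ?_ ?_ ?_ ?_ (fun _ _ ↦ rfl) <;>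
    · intro j hj
      simp only [mem_Icc] at hj ⊢
      omega

end Finset

namespace IsPrimitiveRoot

variable {R : Type*} [CommRing R] [IsDomain R] {ζ : R} {n : ℕ}

lemma prod_neg_pow_Ico_one (hζ : IsPrimitiveRoot ζ n) : ∏ j ∈ Ico 1 n, -ζ ^ j = 1 := by
  rcases n with _ | n
  · simp
  have h := congrArg (eval 0) (X_pow_sub_C_eq_prod hζ n.succ_pos (one_pow _))
  simp only [eval_sub, eval_pow, eval_X, eval_C, eval_prod, zero_sub, mul_one,
    zero_pow n.succ_ne_zero] at h
  rw [prod_range_succ', pow_zero, ← Nat.Ico_zero_eq_range, prod_Ico_add' (fun j ↦ -ζ ^ j),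
    zero_add] at h
  linear_combination h

lemma prod_neg_pow_Icc_two (hζ : IsPrimitiveRoot ζ n) : ∏ j ∈ Icc 2 (n - 2), -ζ ^ j = 1 := by
  rcases lt_or_ge n 3 with hn | hn
  · rw [Icc_eq_empty (by omega), prod_empty]
  obtain ⟨m, rfl⟩ := Nat.exists_eq_add_of_le' hn
  have h := hζ.prod_neg_pow_Ico_one
  rw [prod_eq_prod_Ico_succ_bot (by omega), prod_Ico_succ_top (by omega)] at h
  rw [show Icc 2 (m + 3 - 2) = Ico (1 + 1) (m + 2) by ext; simp only [mem_Icc, mem_Ico]; omega]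
  linear_combination h - (∏ j ∈ Ico (1 + 1) (m + 2), -ζ ^ j) * hζ.pow_eq_one

lemma prod_one_sub_C_pow_mul_X (hζ : IsPrimitiveRoot ζ n) :
    ∏ j ∈ Icc 2 (n - 2), (1 - C (ζ ^ j) * X) = ∏ j ∈ Icc 2 (n - 2), (X - C (ζ ^ j)) := calc
  _ = ∏ j ∈ Icc 2 (n - 2), C (-ζ ^ j) * (X - C (ζ ^ (n - j))) := by
    refine prod_congr rfl fun j hj ↦ one_sub_C_mul_X_of_mul_eq_one ?_
    rw [← pow_add, Nat.add_sub_cancel' ((mem_Icc.mp hj).2.trans (n.sub_le 2)), hζ.pow_eq_one]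
  _ = C (∏ j ∈ Icc 2 (n - 2), -ζ ^ j) * ∏ j ∈ Icc 2 (n - 2), (X - C (ζ ^ (n - j))) := by
    rw [prod_mul_distrib, map_prod]
  _ = ∏ j ∈ Icc 2 (n - 2), (X - C (ζ ^ j)) := by
    rw [hζ.prod_neg_pow_Icc_two, C_1, one_mul, prod_Icc_reflect (fun j ↦ X - C (ζ ^ j))]

end IsPrimitiveRoot

/-- Let `n ≥ 3`, `η = e^{2πi/n}`, and let `S` be the parameters `1, q, q²` together with `ηʲq`
for `j = 2, …, n−2` of the cyclotomic Hecke algebra of the principal `Φ_n^{(1)}`-block of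
`I₂(n,q)`. Then `(∏_{u∈S, u≠1} u)·∏_{u∈S, u≠q²}(q² − u) = qⁿ·(∏_{u∈S, u≠q²} u)·∏_{u∈S, u≠1}(1 − u)`
in `ℂ[q]`; equivalently, the relative degrees of the parameters `1` and `q²` satisfy
`R_1 = qⁿ·R_{q²}`. -/
theorem heckeParams_relativeDegree_ratio (n : ℕ) (hn : 3 ≤ n) (η : ℂ)
    (hη : η = Complex.exp (2 * Real.pi * Complex.I / (n : ℂ))) :
    ((X : ℂ[X]) * X ^ 2 * ∏ j ∈ Finset.Icc 2 (n - 2), (C (η ^ j) * X)) *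
      ((X ^ 2 - 1) * (X ^ 2 - X) * ∏ j ∈ Finset.Icc 2 (n - 2), (X ^ 2 - C (η ^ j) * X)) =
    (X : ℂ[X]) ^ n * (1 * X * ∏ j ∈ Finset.Icc 2 (n - 2), (C (η ^ j) * X)) *
      ((1 - X) * (1 - X ^ 2) * ∏ j ∈ Finset.Icc 2 (n - 2), (1 - C (η ^ j) * X)) := by
  have hprim : IsPrimitiveRoot η n := hη ▸ Complex.isPrimitiveRoot_exp n (by omega)
  have hcard : #(Icc 2 (n - 2)) = n - 3 := by simp only [Nat.card_Icc]; omega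
  have hfactor : ∏ j ∈ Icc 2 (n - 2), (X ^ 2 - C (η ^ j) * X) =
      (∏ j ∈ Icc 2 (n - 2), (X - C (η ^ j))) * X ^ (n - 3) := by
    rw [← hcard, prod_mul_pow_card]
    exact prod_congr rfl fun _ _ ↦ by ring
  rw [hprim.prod_one_sub_C_pow_mul_X, hfactor]
  obtain ⟨m, rfl⟩ := Nat.exists_eq_add_of_le' hn
  rw [Nat.add_sub_cancel]
  ring
end

section
/- Let n ≥ 3 and let η = e^{2πi/n}. Then: (a) for every 1 ≤ i < n/2, the number 1 is not a root of the polynomial g with (X−1)(X−η^{i})(X−η^{−i})·g = ((1−η^{i})(1−η^{−i})/n)·X(X+1)(X^{n}−1); (b) for all 1 ≤ a < b < n−a, the number 1 is a root of multiplicity exactly 2 of the polynomial D with (X−η^{a})(X−η^{−a})(X−η^{b})(X−η^{−b})·D = ((η^{a}+η^{−a}−η^{b}−η^{−b})/n)·X(X²−1)(X^{n}−1); and (c) if n is even, the polynomial h with (X²−1)·h = (2/n)·X(X^{n}−1) satisfies h(1) ≠ 0. Hence no generic degree of a unipotent character of I₂(n,q) is divisible by (X−1) to exactly the first power, so there are no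 unipotent Φ₁-blocks of I₂(n,q) with cyclic defect group (of weight 1). -/
/-!
Write `X ^ n - 1 = (X - 1) · S` with `S = 1 + X + ⋯ + X ^ (n - 1)`, so that `S(1) = n ≠ 0`.
The factors `X - η^{±k}` with `0 < k < n` do not vanish at `1`, so each generic degree vanishes
at `1` to the order of `X - 1` on the right minus its order on the left: `1 - 1 = 0` for
`φ_{2,i}`, `2 - 0 = 2` for `I₂(n)[a,b]`, and `1 - 1 = 0` for `φ'_{1,n/2}`. For `I₂(n)[a,b]`
the scalar factor is nonzero because `x + x⁻¹ = y + y⁻¹` forces `y = x` or `y = x⁻¹`,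
and neither `η^b = η^a` nor `η^(a+b) = 1` holds when `0 < a < b < n - a`.
-/

open Polynomial

theorem add_inv_eq_add_inv_iff {K : Type*} [Field K] {x y : K} (hx : x ≠ 0) (hy : y ≠ 0) :
    x + x⁻¹ = y + y⁻¹ ↔ x = y ∨ x * y = 1 := by
  have factor : x + x⁻¹ - (y + y⁻¹) = (x - y) * (x * y - 1) / (x * y) := by
    field_simp
    ring
  rw [← sub_eq_zero, factor, div_eq_zero_iff, mul_eq_zero, sub_eq_zero, sub_eq_zero]
  simp [hx, hy]

theorem IsPrimitiveRoot.pow_add_inv_ne {K : Type*} [Field K] {ζ : K} {n a b : ℕ}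
    (hζ : IsPrimitiveRoot ζ n) (hab : a < b) (habn : a + b < n) :
    ζ ^ a + (ζ ^ a)⁻¹ ≠ ζ ^ b + (ζ ^ b)⁻¹ := by
  have hζ₀ : ζ ≠ 0 := hζ.ne_zero (by omega)
  rw [Ne, add_inv_eq_add_inv_iff (pow_ne_zero a hζ₀) (pow_ne_zero b hζ₀), ← pow_add]
  rintro (hpow | hpow)
  · exact hab.ne (hζ.pow_inj (by omega) (by omega) hpow)
  · exact hζ.pow_ne_one_of_pos_of_lt (by omega) habn hpow

namespace Polynomial

variable {R : Type*} [CommRing R] [IsDomain R]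

theorem rootMultiplicity_eq_of_mul_eq_X_sub_C_pow_mul {p q w : R[X]} {a : R} {k : ℕ}
    (hp : ¬p.IsRoot a) (hw : ¬w.IsRoot a) (h : p * q = (X - C a) ^ k * w) :
    q.rootMultiplicity a = k := by
  have hw₀ : w ≠ 0 := by rintro rfl; exact hw (by simp)
  have hpq : p * q ≠ 0 := h ▸ mul_ne_zero (pow_ne_zero _ (X_sub_C_ne_zero a)) hw₀
  have hmult := congrArg (rootMultiplicity a) h
  rw [rootMultiplicity_mul hpq, rootMultiplicity_mul (h ▸ hpq), rootMultiplicity_X_sub_C_pow,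
    rootMultiplicity_eq_zero hp, rootMultiplicity_eq_zero hw] at hmult
  omega

end Polynomial

section GenericDegrees

variable {K : Type*} [Field K] [CharZero K] {n : ℕ} {ζ : K}

theorem phi2_degree_eval_one_ne_zero (hζ : IsPrimitiveRoot ζ n) {i : ℕ} (hi : 1 ≤ i)
    (hin : 2 * i < n) {g : K[X]}
    (hg : (X - 1) * (X - C (ζ ^ i)) * (X - C ((ζ ^ i)⁻¹)) * g =
      C ((1 - ζ ^ i) * (1 - (ζ ^ i)⁻¹) / (n : K)) * (X * (X + 1) * (X ^ n - 1))) :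
    g.eval 1 ≠ 0 := by
  have hn₀ : (n : K) ≠ 0 := Nat.cast_ne_zero.mpr (by omega)
  set c := (1 - ζ ^ i) * (1 - (ζ ^ i)⁻¹) / (n : K)
  have hc : c ≠ 0 := by
    have hpow := hζ.pow_ne_one_of_pos_of_lt (l := i) (by omega) (by omega)
    simp [c, sub_eq_zero, eq_comm (a := (1 : K)), hpow, hn₀]
  have hcancel : (X - C (ζ ^ i)) * (X - C ((ζ ^ i)⁻¹)) * g =
      C c * (X * (X + 1) * ∑ j ∈ Finset.range n, X ^ j) :=
    mul_left_cancel₀ (X_sub_C_ne_zero (1 : K))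
      (by rw [C_1]; linear_combination hg - C c * X * (X + 1) * mul_geom_sum (X : K[X]) n)
  intro hg₀
  have hev := congrArg (eval 1) hcancel
  simp [hg₀, hc, hn₀] at hev

theorem I2_degree_rootMultiplicity_one (hζ : IsPrimitiveRoot ζ n) {a b : ℕ} (ha : 1 ≤ a)
    (hab : a < b) (habn : a + b < n) {D : K[X]}
    (hD : (X - C (ζ ^ a)) * (X - C ((ζ ^ a)⁻¹)) * (X - C (ζ ^ b)) * (X - C ((ζ ^ b)⁻¹)) * D =
      C ((ζ ^ a + (ζ ^ a)⁻¹ - ζ ^ b - (ζ ^ b)⁻¹) / (n : K)) *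
        (X * (X ^ 2 - 1) * (X ^ n - 1))) :
    D.rootMultiplicity 1 = 2 := by
  have hn₀ : (n : K) ≠ 0 := Nat.cast_ne_zero.mpr (by omega)
  set c := (ζ ^ a + (ζ ^ a)⁻¹ - ζ ^ b - (ζ ^ b)⁻¹) / (n : K)
  have hc : c ≠ 0 :=
    div_ne_zero (by rw [sub_sub, sub_ne_zero]; exact hζ.pow_add_inv_ne hab habn) hn₀
  refine rootMultiplicity_eq_of_mul_eq_X_sub_C_pow_mul
    (w := C c * X * (X + 1) * ∑ j ∈ Finset.range n, X ^ j) ?_ ?_ (hD.trans ?_)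
  · simp [sub_eq_zero, eq_comm (a := (1 : K)), hζ.pow_ne_one_of_pos_of_lt (by omega : a ≠ 0)
      (by omega), hζ.pow_ne_one_of_pos_of_lt (by omega : b ≠ 0) (by omega)]
  · simp [hc, hn₀]
  · rw [C_1]
    linear_combination -(C c * X * (X ^ 2 - 1)) * mul_geom_sum (X : K[X]) n

theorem phi1_half_degree_eval_one_ne_zero (hn : 0 < n) {h : K[X]}
    (hh : ((X : K[X]) ^ 2 - 1) * h = C (2 / (n : K)) * (X * (X ^ n - 1))) :
    h.eval 1 ≠ 0 := by
  have hn₀ : (n : K) ≠ 0 := Nat.cast_ne_zero.mpr hn.ne'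
  have hcancel : (X + 1) * h = C (2 / (n : K)) * (X * ∑ j ∈ Finset.range n, X ^ j) :=
    mul_left_cancel₀ (X_sub_C_ne_zero (1 : K))
      (by rw [C_1]; linear_combination hh - C (2 / (n : K)) * X * mul_geom_sum (X : K[X]) n)
  intro hh₀
  have hev := congrArg (eval 1) hcancel
  simp [hh₀, hn₀] at hev

end GenericDegrees

/-- For `n ≥ 3` and `η = e^{2πi/n}`: (a) for `1 ≤ i < n/2`, `1` is not a root of the generic
degree `g` of `φ_{2,i}`; (b) for `1 ≤ a < b < n−a`, `1` is a root of multiplicity exactly `2`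
of the generic degree `D` of `I₂(n)[a,b]`; (c) if `n` is even, the common generic degree `h` of
`φ'_{1,n/2}` and `φ''_{1,n/2}` satisfies `h(1) ≠ 0`. Hence no generic degree of a unipotent
character of `I₂(n,q)` is divisible by `X − 1` to exactly the first power, so there are no
unipotent `Φ₁`-blocks of weight `1`. -/
theorem no_weight_one_Phi1_blocks (n : ℕ) (hn : 3 ≤ n) (η : ℂ)
    (hη : η = Complex.exp (2 * Real.pi * Complex.I / (n : ℂ))) :
    (∀ i : ℕ, 1 ≤ i → 2 * i < n → ∀ g : ℂ[X],
      (X - 1) * (X - C (η ^ i)) * (X - C ((η ^ i)⁻¹)) * g =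
        C ((1 - η ^ i) * (1 - (η ^ i)⁻¹) / (n : ℂ)) * (X * (X + 1) * (X ^ n - 1)) →
      g.eval 1 ≠ 0) ∧
    (∀ a b : ℕ, 1 ≤ a → a < b → a + b < n → ∀ D : ℂ[X],
      (X - C (η ^ a)) * (X - C ((η ^ a)⁻¹)) * (X - C (η ^ b)) * (X - C ((η ^ b)⁻¹)) * D =
        C ((η ^ a + (η ^ a)⁻¹ - η ^ b - (η ^ b)⁻¹) / (n : ℂ)) *
          (X * (X ^ 2 - 1) * (X ^ n - 1)) →
      D.rootMultiplicity 1 = 2) ∧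
    (Even n → ∀ h : ℂ[X],
      ((X : ℂ[X]) ^ 2 - 1) * h = C (2 / (n : ℂ)) * (X * (X ^ n - 1)) →
      h.eval 1 ≠ 0) := by
  have hprim : IsPrimitiveRoot η n := hη ▸ Complex.isPrimitiveRoot_exp n (by omega)
  exact ⟨fun i hi hin g => phi2_degree_eval_one_ne_zero hprim hi hin,
    fun a b ha hab habn D => I2_degree_rootMultiplicity_one hprim ha hab habn,
    fun _ h => phi1_half_degree_eval_one_ne_zero (by omega)⟩
end

section
/- Let n ≥ 3 be odd and let η = e^{2πi/n}. Then −1 is a simple root of the polynomial g with (X−1)(X−η^{i})(X−η^{−i})·g = ((1−η^{i})(1−η^{−i})/n)·X(X+1)(X^{n}−1) for every 1 ≤ i < n/2, and −1 is a simple root of the polynomial D with (X−η^{a})(X−η^{−a})(X−η^{b})(X−η^{−b})·D = ((η^{a}+η^{−a}−η^{b}−η^{−b})/n)·X(X²−1)(X^{n}−1) for all 1 ≤ a < b < n−a; while −1 is not a root of the constant polynomial 1 nor of X^{n}. Hence among the generic degrees of unipotent characters of I₂(n,q) (n odd), exactly Deg(φ_{1,0}) = 1 and Deg(φ_{1,n})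 = q^{n} are not divisible by X+1, so the principal Φ₂-block consists of the two unipotent characters φ_{1,0} and φ_{1,n}. -/
open Polynomial

/-!
All roots `η^{±k}` of the factor multiplying `g` (resp. `D`) are `n`-th roots of unity, and for
odd `n` no `n`-th root of unity equals `-1`. On the right-hand side `X + 1` occurs exactly once,
since `X`, `X - 1` and `X^n - 1` do not vanish at `-1`. So `-1` is a simple root of `g` and `D` as
soon as the scalar factor is nonzero, i.e. `η^i ≠ 1`, resp. `η^a ≠ η^{±b}`, which is what
`2i < n` and `1 ≤ a < b < n - a` guarantee.
-/

theorem rootMultiplicity_eq_one_of_mul_eq_X_sub_C_mul {R : Type*} [CommRing R] [IsDomain R]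
    {P Q g : R[X]} {a : R} (hP : ¬P.IsRoot a) (hQ : ¬Q.IsRoot a)
    (h : P * g = (X - C a) * Q) : g.rootMultiplicity a = 1 := by
  have hP0 : P ≠ 0 := by rintro rfl; exact hP (by simp)
  have hQ0 : Q ≠ 0 := by rintro rfl; exact hQ (by simp)
  have hRHS : (X - C a) * Q ≠ 0 := mul_ne_zero (X_sub_C_ne_zero a) hQ0
  have key := congrArg (rootMultiplicity a) h
  rw [rootMultiplicity_mul (h ▸ hRHS), rootMultiplicity_mul hRHS, rootMultiplicity_eq_zero hP,
    rootMultiplicity_eq_zero hQ, rootMultiplicity_X_sub_C_self] at key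
  omega

theorem add_inv_sub_sub_inv_ne_zero {K : Type*} [Field K] {x y : K} (hx : x ≠ 0) (hy : y ≠ 0)
    (hxy : x ≠ y) (hxy1 : x * y ≠ 1) : x + x⁻¹ - y - y⁻¹ ≠ 0 := by
  have : x + x⁻¹ - y - y⁻¹ = (x - y) * (x * y - 1) / (x * y) := by
    field_simp
    ring
  rw [this]
  exact div_ne_zero (mul_ne_zero (sub_ne_zero.mpr hxy) (sub_ne_zero.mpr hxy1)) (mul_ne_zero hx hy)

section CharZero

variable {K : Type*} [Field K] [CharZero K] {n : ℕ} {x y : K}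

theorem ne_neg_one_of_pow_eq_one_of_odd (hn : Odd n) (hx : x ^ n = 1) : x ≠ -1 := by
  rintro rfl
  rw [hn.neg_one_pow] at hx
  norm_num at hx

theorem not_isRoot_neg_one_X_pow_sub_one (hn : Odd n) : ¬(X ^ n - 1 : K[X]).IsRoot (-1) := by
  simp [hn.neg_one_pow]
  norm_num

theorem rootMultiplicity_neg_one_eq_one_of_phi2 (hn : Odd n) (hxn : x ^ n = 1) (hx1 : x ≠ 1)
    {g : K[X]} (h : (X - 1) * (X - C x) * (X - C x⁻¹) * g =
      C ((1 - x) * (1 - x⁻¹) / n) * (X * (X + 1) * (X ^ n - 1))) :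
    g.rootMultiplicity (-1) = 1 := by
  have hc : (1 - x) * (1 - x⁻¹) / n ≠ 0 :=
    div_ne_zero (mul_ne_zero (sub_ne_zero.mpr hx1.symm) (sub_ne_zero.mpr (inv_ne_one.mpr hx1).symm))
      (Nat.cast_ne_zero.mpr hn.pos.ne')
  refine rootMultiplicity_eq_one_of_mul_eq_X_sub_C_mul
    (P := (X - 1) * (X - C x) * (X - C x⁻¹))
    (Q := C ((1 - x) * (1 - x⁻¹) / n) * (X * (X ^ n - 1))) ?_ ?_ ?_
  · simp only [root_mul, root_X_sub_C, not_or]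
    have hneg {z : K} : z ^ n = 1 → z ≠ -1 := ne_neg_one_of_pow_eq_one_of_odd hn
    exact ⟨⟨by norm_num, hneg hxn⟩, hneg (by rw [inv_pow, hxn, inv_one])⟩
  · simp only [root_mul, not_or]
    exact ⟨not_isRoot_C _ _ hc, by simp, not_isRoot_neg_one_X_pow_sub_one hn⟩
  · rw [h, map_neg, map_one]
    ring

theorem rootMultiplicity_neg_one_eq_one_of_I2 (hn : Odd n) (hxn : x ^ n = 1) (hyn : y ^ n = 1)
    (hxy : x ≠ y) (hxy1 : x * y ≠ 1) {D : K[X]}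
    (h : (X - C x) * (X - C x⁻¹) * (X - C y) * (X - C y⁻¹) * D =
      C ((x + x⁻¹ - y - y⁻¹) / n) * (X * (X ^ 2 - 1) * (X ^ n - 1))) :
    D.rootMultiplicity (-1) = 1 := by
  have hx0 : x ≠ 0 := by rintro rfl; simp [hn.pos.ne'] at hxn
  have hy0 : y ≠ 0 := by rintro rfl; simp [hn.pos.ne'] at hyn
  have hc : (x + x⁻¹ - y - y⁻¹) / n ≠ 0 :=
    div_ne_zero (add_inv_sub_sub_inv_ne_zero hx0 hy0 hxy hxy1) (Nat.cast_ne_zero.mpr hn.pos.ne')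
  refine rootMultiplicity_eq_one_of_mul_eq_X_sub_C_mul
    (P := (X - C x) * (X - C x⁻¹) * (X - C y) * (X - C y⁻¹))
    (Q := C ((x + x⁻¹ - y - y⁻¹) / n) * (X * (X - 1) * (X ^ n - 1))) ?_ ?_ ?_
  · simp only [root_mul, root_X_sub_C, not_or]
    have hneg {z : K} : z ^ n = 1 → z ≠ -1 := ne_neg_one_of_pow_eq_one_of_odd hn
    exact ⟨⟨⟨hneg hxn, hneg (by rw [inv_pow, hxn, inv_one])⟩, hneg hyn⟩,
      hneg (by rw [inv_pow, hyn, inv_one])⟩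
  · simp only [root_mul, not_or]
    exact ⟨not_isRoot_C _ _ hc, ⟨by simp, by norm_num⟩, not_isRoot_neg_one_X_pow_sub_one hn⟩
  · rw [h, map_neg, map_one]
    ring

end CharZero

theorem principal_Phi2_block_odd_general (n : ℕ) (hodd : Odd n) (η : ℂ)
    (hη : η = Complex.exp (2 * Real.pi * Complex.I / (n : ℂ))) :
    (∀ i : ℕ, 1 ≤ i → 2 * i < n → ∀ g : ℂ[X],
      (X - 1) * (X - C (η ^ i)) * (X - C ((η ^ i)⁻¹)) * g =
        C ((1 - η ^ i) * (1 - (η ^ i)⁻¹) / (n : ℂ)) * (X * (X + 1) * (X ^ n - 1)) →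
      g.rootMultiplicity (-1) = 1) ∧
    (∀ a b : ℕ, 1 ≤ a → a < b → a + b < n → ∀ D : ℂ[X],
      (X - C (η ^ a)) * (X - C ((η ^ a)⁻¹)) * (X - C (η ^ b)) * (X - C ((η ^ b)⁻¹)) * D =
        C ((η ^ a + (η ^ a)⁻¹ - η ^ b - (η ^ b)⁻¹) / (n : ℂ)) *
          (X * (X ^ 2 - 1) * (X ^ n - 1)) →
      D.rootMultiplicity (-1) = 1) ∧
    (1 : ℂ[X]).eval (-1) ≠ 0 ∧ ((X : ℂ[X]) ^ n).eval (-1) ≠ 0 := by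
  have hprim : IsPrimitiveRoot η n := hη ▸ Complex.isPrimitiveRoot_exp n hodd.pos.ne'
  have hroot (k : ℕ) : (η ^ k) ^ n = 1 := by rw [pow_right_comm, hprim.pow_eq_one, one_pow]
  refine ⟨fun i hi hin g h => ?_, fun a b ha hab habn D h => ?_, by simp, by simp [hodd.neg_one_pow]⟩
  · exact rootMultiplicity_neg_one_eq_one_of_phi2 hodd (hroot i)
      (hprim.pow_ne_one_of_pos_of_lt (by omega) (by omega)) h
  · refine rootMultiplicity_neg_one_eq_one_of_I2 hodd (hroot a) (hroot b) (fun hxy => ?_) ?_ h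
    · exact hab.ne (hprim.pow_inj (by omega) (by omega) hxy)
    · rw [← pow_add]
      exact hprim.pow_ne_one_of_pos_of_lt (by omega) habn

/-- For `n ≥ 3` odd and `η = e^{2πi/n}`: `−1` is a simple root of the generic degree `g` of
each `φ_{2,i}` (`1 ≤ i < n/2`) and of the generic degree `D` of each `I₂(n)[a,b]`
(`1 ≤ a < b < n−a`), while `−1` is not a root of the constant polynomial `1` nor of `Xⁿ`.
Hence among the generic degrees of unipotent characters of `I₂(n,q)` exactly
`Deg(φ_{1,0}) = 1` and `Deg(φ_{1,n}) = qⁿ` are not divisible by `X + 1`, so the principal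
`Φ₂`-block consists of the two unipotent characters `φ_{1,0}` and `φ_{1,n}`. -/
theorem principal_Phi2_block_odd (n : ℕ) (hn : 3 ≤ n) (hodd : Odd n) (η : ℂ)
    (hη : η = Complex.exp (2 * Real.pi * Complex.I / (n : ℂ))) :
    (∀ i : ℕ, 1 ≤ i → 2 * i < n → ∀ g : ℂ[X],
      (X - 1) * (X - C (η ^ i)) * (X - C ((η ^ i)⁻¹)) * g =
        C ((1 - η ^ i) * (1 - (η ^ i)⁻¹) / (n : ℂ)) * (X * (X + 1) * (X ^ n - 1)) →
      g.rootMultiplicity (-1) = 1) ∧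
    (∀ a b : ℕ, 1 ≤ a → a < b → a + b < n → ∀ D : ℂ[X],
      (X - C (η ^ a)) * (X - C ((η ^ a)⁻¹)) * (X - C (η ^ b)) * (X - C ((η ^ b)⁻¹)) * D =
        C ((η ^ a + (η ^ a)⁻¹ - η ^ b - (η ^ b)⁻¹) / (n : ℂ)) *
          (X * (X ^ 2 - 1) * (X ^ n - 1)) →
      D.rootMultiplicity (-1) = 1) ∧
    (1 : ℂ[X]).eval (-1) ≠ 0 ∧ ((X : ℂ[X]) ^ n).eval (-1) ≠ 0 :=
  principal_Phi2_block_odd_general n hodd η hη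
end
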